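/- arXiv:2002.10435 — 7 statements merged into one kernel-verified Lean document; each statement's English description precedes it below -/
import Mathlib

section
/- Let $n = 2^m$ and let $v \in \{\pm 1\}^n$ have at most $\ell$ sign changes (i.e., at most $\ell$ indices $i \in [n-1]$ with $v_{i+1} \neq v_i$). Then the Haar wavelet transform $Hv$ of $v$ has at most $\ell \log_2 n + 1$ nonzero entries. -/
/-- Entry of the Haar wavelet basis matrix for `ℝ^(2^m)`: `haarEntry m ν a` is the `a`-th
coordinate of the `ν`-th Haar wavelet (row `ν = 0` is the father wavelet; row
`ν = 2^i + j` for `0 ≤ j < 2^i`, `0 ≤ i < m` is the wavelet `ψ_{i,j}`, with `ν = 1`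
the mother wavelet). -/
noncomputable def haarEntry (m ν a : ℕ) : ℝ :=
  if ν = 0 then 1 / Real.sqrt (2 ^ m)
  else
    let i := Nat.log 2 ν
    let j := ν - 2 ^ i
    let len := 2 ^ (m - i)
    if len * j ≤ a ∧ a < len * j + len / 2 then 1 / Real.sqrt (len : ℝ)
    else if len * j + len / 2 ≤ a ∧ a < len * (j + 1) then -(1 / Real.sqrt (len : ℝ))
    else 0

/-! A non-father wavelet is orthogonal to every vector that is constant on its support, so a
nonzero coefficient `⟨ψ, v⟩` forces a sign change of `v` inside the support of `ψ`. The supports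
of the wavelets of one level are disjoint dyadic intervals and there are `m` non-father levels,
so each sign change is charged by at most `m` wavelets; the father wavelet accounts for the `+ 1`.
-/

open Finset

noncomputable def haarCoeff (m : ℕ) (v : ℕ → ℝ) (ν : ℕ) : ℝ :=
  ∑ a ∈ range (2 ^ m), haarEntry m ν a * v a

def haarLength (m ν : ℕ) : ℕ := 2 ^ (m - Nat.log 2 ν)

def haarStart (m ν : ℕ) : ℕ := haarLength m ν * (ν - 2 ^ Nat.log 2 ν)

def haarSupport (m ν : ℕ) : Finset ℕ := Ico (haarStart m ν) (haarStart m ν + haarLength m ν)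

lemma haarEntry_of_ne_zero {m ν : ℕ} (hν : ν ≠ 0) (a : ℕ) :
    haarEntry m ν a =
      if haarStart m ν ≤ a ∧ a < haarStart m ν + haarLength m ν / 2 then
        1 / √(haarLength m ν : ℝ)
      else if haarStart m ν + haarLength m ν / 2 ≤ a ∧ a < haarStart m ν + haarLength m ν then
        -(1 / √(haarLength m ν : ℝ))
      else 0 := by
  rw [haarEntry, if_neg hν]
  rfl

lemma haarStart_add_haarLength_le {m ν : ℕ} (hν : ν ≠ 0) (hlt : ν < 2 ^ m) :
    haarStart m ν + haarLength m ν ≤ 2 ^ m := by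
  have hlow : 2 ^ Nat.log 2 ν ≤ ν := Nat.pow_log_le_self 2 hν
  have hhigh : ν < 2 ^ Nat.log 2 ν * 2 := by
    rw [← pow_succ]; exact Nat.lt_pow_succ_log_self (by norm_num) ν
  have hlog : Nat.log 2 ν ≤ m := (Nat.log_lt_of_lt_pow hν hlt).le
  calc haarStart m ν + haarLength m ν = haarLength m ν * (ν - 2 ^ Nat.log 2 ν + 1) := by
        rw [haarStart, Nat.mul_succ]
    _ ≤ haarLength m ν * 2 ^ Nat.log 2 ν := Nat.mul_le_mul_left _ (by omega)
    _ = 2 ^ m := by rw [haarLength, ← pow_add, Nat.sub_add_cancel hlog]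

lemma even_haarLength {m ν : ℕ} (hν : ν ≠ 0) (hlt : ν < 2 ^ m) : Even (haarLength m ν) :=
  (Nat.even_pow' (by have := Nat.log_lt_of_lt_pow hν hlt; omega)).2 even_two

lemma eq_of_mem_haarSupport {m ν₁ ν₂ k : ℕ} (hν₁ : ν₁ ≠ 0) (hν₂ : ν₂ ≠ 0)
    (hlog : Nat.log 2 ν₁ = Nat.log 2 ν₂) (h₁ : k ∈ haarSupport m ν₁) (h₂ : k ∈ haarSupport m ν₂) :
    ν₁ = ν₂ := by
  have offset_eq : ∀ ν, k ∈ haarSupport m ν → k / haarLength m ν = ν - 2 ^ Nat.log 2 ν := by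
    intro ν hk
    rw [haarSupport, mem_Ico, haarStart] at hk
    exact Nat.div_eq_of_lt_le (by rw [mul_comm]; exact hk.1)
      (by rw [Nat.succ_mul, mul_comm]; exact hk.2)
  have e₁ := offset_eq ν₁ h₁
  have e₂ := offset_eq ν₂ h₂
  have low₁ := Nat.pow_log_le_self 2 hν₁
  have low₂ := Nat.pow_log_le_self 2 hν₂
  rw [haarLength, hlog] at e₁
  rw [hlog] at low₁
  rw [haarLength] at e₂
  omega

lemma card_filter_mem_haarSupport_le (m k : ℕ) :
    #{ν ∈ range (2 ^ m) | ν ≠ 0 ∧ k ∈ haarSupport m ν} ≤ m := by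
  calc #{ν ∈ range (2 ^ m) | ν ≠ 0 ∧ k ∈ haarSupport m ν} ≤ #(range m) := by
        refine card_le_card_of_injOn (Nat.log 2) (fun ν hν => ?_) (fun ν₁ hν₁ ν₂ hν₂ hlog => ?_)
        · simp only [coe_filter, mem_range, Set.mem_ofPred_eq, coe_range, Set.mem_Iio] at hν ⊢
          exact Nat.log_lt_of_lt_pow hν.2.1 hν.1
        · simp only [coe_filter, Set.mem_ofPred_eq] at hν₁ hν₂
          exact eq_of_mem_haarSupport hν₁.2.1 hν₂.2.1 hlog hν₁.2.2 hν₂.2.2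
    _ = m := card_range m

lemma eq_left_of_succ_eq_on_Ico {L R : ℕ} {v : ℕ → ℝ}
    (h : ∀ k ∈ Ico L R, k + 1 ∈ Ico L R → v (k + 1) = v k) : ∀ a ∈ Ico L R, v a = v L := by
  intro a ha
  obtain ⟨hLa, haR⟩ := mem_Ico.1 ha
  induction a, hLa using Nat.le_induction with
  | base => rfl
  | succ a hLa ih =>
    rw [h a (mem_Ico.2 ⟨hLa, by omega⟩) ha, ih (mem_Ico.2 ⟨hLa, by omega⟩) (by omega)]

lemma sum_range_step_mul_eq_zero {N L s : ℕ} (c : ℝ) {v : ℕ → ℝ} (hN : L + 2 * s ≤ N)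
    (hv : ∀ a ∈ Ico L (L + 2 * s), v a = v L) :
    ∑ a ∈ range N,
      (if L ≤ a ∧ a < L + s then c else if L + s ≤ a ∧ a < L + 2 * s then -c else 0) * v a = 0 := by
  calc _ = ∑ a ∈ range N, ((if a ∈ Ico L (L + s) then c * v L else 0)
          - (if a ∈ Ico (L + s) (L + 2 * s) then c * v L else 0)) := by
        refine sum_congr rfl fun a _ => ?_
        by_cases h₁ : L ≤ a ∧ a < L + s
        · rw [if_pos h₁, if_pos (mem_Ico.2 h₁), if_neg (by simp only [mem_Ico]; omega),
            hv a (mem_Ico.2 ⟨h₁.1, by omega⟩), sub_zero]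
        by_cases h₂ : L + s ≤ a ∧ a < L + 2 * s
        · rw [if_neg h₁, if_pos h₂, if_neg (by simpa only [mem_Ico] using h₁),
            if_pos (mem_Ico.2 h₂), hv a (mem_Ico.2 ⟨by omega, h₂.2⟩), zero_sub, neg_mul]
        · rw [if_neg h₁, if_neg h₂, if_neg (by simpa only [mem_Ico] using h₁),
            if_neg (by simpa only [mem_Ico] using h₂), zero_mul, sub_zero]
    _ = 0 := by
        rw [sum_sub_distrib, sum_ite_mem, sum_ite_mem,
          inter_eq_right.2 fun a ha => mem_range.2 (by simp only [mem_Ico] at ha; omega),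
          inter_eq_right.2 fun a ha => mem_range.2 (by simp only [mem_Ico] at ha; omega),
          sum_const, sum_const, Nat.card_Ico, Nat.card_Ico,
          show L + s - L = s by omega, show L + 2 * s - (L + s) = s by omega, sub_self]

lemma haarCoeff_eq_zero {m ν : ℕ} {v : ℕ → ℝ} (hν : ν ≠ 0) (hlt : ν < 2 ^ m)
    (hv : ∀ k ∈ haarSupport m ν, k + 1 ∈ haarSupport m ν → v (k + 1) = v k) :
    haarCoeff m v ν = 0 := by
  obtain ⟨s, hs⟩ := (even_haarLength hν hlt).two_dvd
  have hs2 : haarLength m ν / 2 = s := by omega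
  rw [haarSupport, hs] at hv
  simp only [haarCoeff, haarEntry_of_ne_zero hν, hs2]
  rw [hs]
  exact sum_range_step_mul_eq_zero _ (hs ▸ haarStart_add_haarLength_le hν hlt)
    (eq_left_of_succ_eq_on_Ico hv)

lemma exists_signChange_mem_haarSupport {m ν : ℕ} {v : ℕ → ℝ} (hν : ν ≠ 0) (hlt : ν < 2 ^ m)
    (hcoeff : haarCoeff m v ν ≠ 0) :
    ∃ k < 2 ^ m - 1, v (k + 1) ≠ v k ∧ k ∈ haarSupport m ν := by
  by_contra! hnone
  refine hcoeff (haarCoeff_eq_zero hν hlt fun k hk hk1 => ?_)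
  have hk_lt : k + 1 < 2 ^ m := by
    have := haarStart_add_haarLength_le hν hlt
    simp only [haarSupport, mem_Ico] at hk1
    omega
  by_contra hchange
  exact hnone k (by omega) hchange hk

open scoped Classical in
theorem stmt_4_general (m ℓ : ℕ) (v : ℕ → ℝ)
    (hsign : ((Finset.range (2 ^ m - 1)).filter (fun i => v (i + 1) ≠ v i)).card ≤ ℓ) :
    ((Finset.range (2 ^ m)).filter
        (fun ν => (∑ a ∈ Finset.range (2 ^ m), haarEntry m ν a * v a) ≠ 0)).card
      ≤ ℓ * m + 1 := by
  set S := (range (2 ^ m - 1)).filter (fun i => v (i + 1) ≠ v i)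
  set T := (range (2 ^ m)).filter (fun ν => haarCoeff m v ν ≠ 0)
  have hT : T.erase 0 ⊆ S.biUnion fun k => {ν ∈ range (2 ^ m) | ν ≠ 0 ∧ k ∈ haarSupport m ν} := by
    intro ν hν
    obtain ⟨hν0, hνT⟩ := mem_erase.1 hν
    obtain ⟨hlt, hcoeff⟩ := mem_filter.1 hνT
    obtain ⟨k, hk, hchange, hsupp⟩ :=
      exists_signChange_mem_haarSupport hν0 (mem_range.1 hlt) hcoeff
    exact mem_biUnion.2
      ⟨k, mem_filter.2 ⟨mem_range.2 hk, hchange⟩, mem_filter.2 ⟨hlt, hν0, hsupp⟩⟩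
  calc #T ≤ #(T.erase 0) + 1 := by have := pred_card_le_card_erase (s := T) (a := 0); omega
    _ ≤ #S * m + 1 := by
        gcongr
        exact (card_le_card hT).trans
          (card_biUnion_le_card_mul _ _ _ fun k _ => card_filter_mem_haarSupport_le m k)
    _ ≤ ℓ * m + 1 := by gcongr

open scoped Classical in
theorem stmt_4 (m ℓ : ℕ) (v : ℕ → ℝ)
    (hv : ∀ a < 2 ^ m, v a = 1 ∨ v a = -1)
    (hsign : ((Finset.range (2 ^ m - 1)).filter (fun i => v (i + 1) ≠ v i)).card ≤ ℓ) :
    ((Finset.range (2 ^ m)).filter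
        (fun ν => (∑ a ∈ Finset.range (2 ^ m), haarEntry m ν a * v a) ≠ 0)).card
      ≤ ℓ * m + 1 :=
  stmt_4_general m ℓ v hsign
end

section
/- Let $n = 2^m$ and let $v \in \{\pm 1\}^n$ have at most $\ell$ sign changes. For each Haar wavelet $\psi_{i,j}$ (with scale parameter $i$), we have $2^{-(m-i)/2} \cdot |\langle \psi_{i,j}, v\rangle| \leq 1$; that is, the Haar-weighted $L^\infty$ norm of $Hv$ is at most 1. Consequently the Haar-weighted $L^1$ norm and the Haar-weighted squared $L^2$ norm of $Hv$ are each at most $\ell \log_2 n + 1$. -/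
/-- The Haar weight `2^{-(m-i)/2}` associated to the `ν`-th Haar wavelet, whose scale is `i`. -/
noncomputable def haarWeight (m ν : ℕ) : ℝ :=
  if ν = 0 then 1 / Real.sqrt (2 ^ m)
  else 1 / Real.sqrt ((2 : ℝ) ^ (m - Nat.log 2 ν))

/-! A Haar wavelet of scale `i` is `±2^{-(m-i)/2}` on a dyadic block of length `2^{m-i}` and
vanishes elsewhere, so its weighted coefficient against a `±1` vector is at most
`2^{-(m-i)/2} · 2^{-(m-i)/2} · 2^{m-i} = 1`. A wavelet other than the constant one annihilates
every vector that is constant on its block, and the blocks of one scale are disjoint, so each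
sign change of `v` makes at most `m` coefficients nonzero. Hence `Hv` has at most `ℓ m + 1`
nonzero entries, each of weighted size at most `1`; this bounds the weighted `L¹` norm and, as
`x² ≤ x` on `[0, 1]`, the squared weighted `L²` norm. -/

open Finset

lemma log_two_two_pow_add {i j : ℕ} (hj : j < 2 ^ i) : Nat.log 2 (2 ^ i + j) = i := by
  rw [Nat.log_eq_iff (by simp), pow_succ]
  omega

lemma exists_eq_two_pow_add {ν : ℕ} (hν : ν ≠ 0) : ∃ i j, j < 2 ^ i ∧ ν = 2 ^ i + j := by
  have hlow := Nat.pow_log_le_self 2 hν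
  have hhigh := Nat.lt_pow_succ_log_self one_lt_two ν
  rw [pow_succ] at hhigh
  exact ⟨Nat.log 2 ν, ν - 2 ^ Nat.log 2 ν, by omega, by omega⟩

lemma eq_of_mem_Ico_of_forall_succ_eq {α : Type*} {v : ℕ → α} {lo hi : ℕ}
    (h : ∀ a, lo ≤ a → a + 1 < hi → v (a + 1) = v a) : ∀ a ∈ Ico lo hi, v a = v lo := by
  simp only [mem_Ico]
  rintro a ⟨hlo, hhi⟩
  induction a, hlo using Nat.le_induction with
  | base => rfl
  | succ a ha ih => rw [h a ha hhi, ih (by omega)]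

lemma abs_sum_mul_le_mul_card {n : ℕ} {e v : ℕ → ℝ} {s : Finset ℕ} {c : ℝ} (hc : 0 ≤ c)
    (he : ∀ a < n, |e a| ≤ (s : Set ℕ).indicator (fun _ => c) a) (hv : ∀ a < n, |v a| ≤ 1) :
    |∑ a ∈ range n, e a * v a| ≤ c * #s :=
  calc |∑ a ∈ range n, e a * v a|
      ≤ ∑ a ∈ range n, |e a * v a| := abs_sum_le_sum_abs _ _
    _ ≤ ∑ a ∈ range n ∪ s, (s : Set ℕ).indicator (fun _ => c) a := by
      refine sum_le_sum_of_subset_of_nonneg subset_union_left (fun a _ _ => ?_) |>.trans' ?_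
      · exact Set.indicator_nonneg (fun _ _ => hc) a
      refine sum_le_sum fun a ha => ?_
      have ha := mem_range.1 ha
      rw [abs_mul]
      exact (mul_le_of_le_one_right (abs_nonneg _) (hv a ha)).trans (he a ha)
    _ = c * #s := by
      rw [sum_indicator_subset _ subset_union_right, sum_const, nsmul_eq_mul, mul_comm]

def haarStep (c : ℝ) (lo d a : ℕ) : ℝ :=
  if a ∈ Ico lo (lo + d) then c else if a ∈ Ico (lo + d) (lo + 2 * d) then -c else 0

lemma abs_haarStep_le_indicator {c : ℝ} (hc : 0 ≤ c) (lo d a : ℕ) :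
    |haarStep c lo d a| ≤ (Ico lo (lo + 2 * d) : Set ℕ).indicator (fun _ => c) a := by
  unfold haarStep
  split_ifs with h₁ h₂
  · rw [abs_of_nonneg hc, Set.indicator_of_mem (by simp at h₁ ⊢; omega)]
  · rw [abs_neg, abs_of_nonneg hc, Set.indicator_of_mem (by simp at h₂ ⊢; omega)]
  · simpa using Set.indicator_nonneg (fun _ _ => hc) a

lemma sum_haarStep_mul_eq_zero (c : ℝ) {lo d n : ℕ} {v : ℕ → ℝ} (hn : lo + 2 * d ≤ n)
    (hv : ∀ a ∈ Ico lo (lo + 2 * d), v a = v lo) :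
    ∑ a ∈ range n, haarStep c lo d a * v a = 0 := by
  have hsub : Ico lo (lo + 2 * d) ⊆ range n := fun a ha => by simp at ha ⊢; omega
  rw [← sum_subset hsub fun a _ ha => by
      rw [haarStep, if_neg, if_neg, zero_mul] <;> simp at ha ⊢ <;> omega,
    ← sum_Ico_consecutive _ (by omega : lo ≤ lo + d) (by omega : lo + d ≤ lo + 2 * d)]
  have hfirst : ∀ a ∈ Ico lo (lo + d), haarStep c lo d a * v a = c * v lo := fun a ha => by
    rw [haarStep, if_pos ha, hv a (Ico_subset_Ico_right (by omega) ha)]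
  have hsecond : ∀ a ∈ Ico (lo + d) (lo + 2 * d), haarStep c lo d a * v a = -c * v lo :=
    fun a ha => by
      rw [haarStep, if_neg (by simp at ha ⊢; omega), if_pos ha,
        hv a (Ico_subset_Ico_left (by omega) ha)]
  rw [sum_congr rfl hfirst, sum_congr rfl hsecond]
  simp only [sum_const, Nat.card_Ico]
  rw [show lo + 2 * d - (lo + d) = lo + d - lo by omega]
  simp

lemma haarEntry_two_pow_add {m i j : ℕ} (hi : i < m) (hj : j < 2 ^ i) (a : ℕ) :
    haarEntry m (2 ^ i + j) a =
      haarStep (1 / √(2 ^ (m - i))) (2 ^ (m - i) * j) (2 ^ (m - i - 1)) a := by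
  have hlen : 2 ^ (m - i) = 2 * 2 ^ (m - i - 1) := (mul_pow_sub_one (by omega) 2).symm
  have hhalf : 2 ^ (m - i) / 2 = 2 ^ (m - i - 1) := by omega
  have hend : 2 ^ (m - i) * (j + 1) = 2 ^ (m - i) * j + 2 * 2 ^ (m - i - 1) := by
    rw [mul_add_one, ← hlen]
  simp only [haarEntry, log_two_two_pow_add hj, add_tsub_cancel_left,
    hhalf, hend, haarStep, mem_Ico, Nat.cast_pow, Nat.cast_ofNat]
  simp

lemma haarWeight_two_pow_add {m i j : ℕ} (hj : j < 2 ^ i) :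
    haarWeight m (2 ^ i + j) = 1 / √(2 ^ (m - i)) := by
  simp [haarWeight, log_two_two_pow_add hj]

lemma haarWeight_nonneg (m ν : ℕ) : 0 ≤ haarWeight m ν := by
  unfold haarWeight; split_ifs <;> positivity

lemma exists_abs_haarEntry_le_indicator {m ν : ℕ} (hν : ν < 2 ^ m) :
    ∃ s : Finset ℕ, haarWeight m ν ^ 2 * #s = 1 ∧
      ∀ a < 2 ^ m, |haarEntry m ν a| ≤ (s : Set ℕ).indicator (fun _ => haarWeight m ν) a := by
  rcases eq_or_ne ν 0 with rfl | hν₀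
  · refine ⟨range (2 ^ m), ?_, fun a ha => ?_⟩
    · simp [haarWeight]
    · rw [Set.indicator_of_mem (by simpa using ha), haarEntry, if_pos rfl, haarWeight, if_pos rfl,
        abs_of_nonneg (by positivity)]
  obtain ⟨i, j, hj, rfl⟩ := exists_eq_two_pow_add hν₀
  have hi : i < m := (Nat.pow_lt_pow_iff_right one_lt_two).1 (by omega)
  refine ⟨Ico (2 ^ (m - i) * j) (2 ^ (m - i) * j + 2 * 2 ^ (m - i - 1)), ?_, fun a _ => ?_⟩
  · rw [Nat.card_Ico, add_tsub_cancel_left, mul_pow_sub_one (by omega), haarWeight_two_pow_add hj]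
    simp
  · rw [haarEntry_two_pow_add hi hj, haarWeight_two_pow_add hj]
    exact abs_haarStep_le_indicator (by positivity) _ _ a

lemma haarWeight_mul_abs_sum_le_one {m ν : ℕ} (hν : ν < 2 ^ m) {v : ℕ → ℝ}
    (hv : ∀ a < 2 ^ m, |v a| ≤ 1) :
    haarWeight m ν * |∑ a ∈ range (2 ^ m), haarEntry m ν a * v a| ≤ 1 := by
  obtain ⟨s, hs, he⟩ := exists_abs_haarEntry_le_indicator hν
  calc haarWeight m ν * |∑ a ∈ range (2 ^ m), haarEntry m ν a * v a|
      ≤ haarWeight m ν * (haarWeight m ν * #s) :=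
        mul_le_mul_of_nonneg_left (abs_sum_mul_le_mul_card (haarWeight_nonneg m ν) he hv)
          (haarWeight_nonneg m ν)
    _ = 1 := by rw [← hs]; ring

/-- `b / 2 ^ (m - i) = j` says that `b` lies in the support block of the wavelet `2 ^ i + j`. -/
lemma exists_sign_change_of_sum_haarEntry_ne_zero {m i j : ℕ} (hi : i < m) (hj : j < 2 ^ i)
    {v : ℕ → ℝ} (h : ∑ a ∈ range (2 ^ m), haarEntry m (2 ^ i + j) a * v a ≠ 0) :
    ∃ b < 2 ^ m - 1, v (b + 1) ≠ v b ∧ b / 2 ^ (m - i) = j := by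
  by_contra! hconst
  have hlen : 2 * 2 ^ (m - i - 1) = 2 ^ (m - i) := mul_pow_sub_one (by omega) 2
  have hend : 2 ^ (m - i) * j + 2 * 2 ^ (m - i - 1) ≤ 2 ^ m := by
    rw [hlen, ← Nat.pow_sub_mul_pow 2 hi.le, ← mul_add_one]
    exact Nat.mul_le_mul_left _ hj
  refine h ?_
  simp_rw [haarEntry_two_pow_add hi hj]
  refine sum_haarStep_mul_eq_zero _ hend (eq_of_mem_Ico_of_forall_succ_eq fun a hlo hhi => ?_)
  by_contra hne
  refine hconst a (by omega) hne (Nat.div_eq_of_lt_le ?_ ?_)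
  · rw [mul_comm]; exact hlo
  · rw [add_one_mul, mul_comm]; omega

lemma card_filter_sum_haarEntry_ne_zero_le (m : ℕ) (v : ℕ → ℝ) :
    #{ν ∈ range (2 ^ m) | ν ≠ 0 ∧ ∑ a ∈ range (2 ^ m), haarEntry m ν a * v a ≠ 0} ≤
      m * #{b ∈ range (2 ^ m - 1) | v (b + 1) ≠ v b} := by
  set S := {b ∈ range (2 ^ m - 1) | v (b + 1) ≠ v b}
  calc _ ≤ #((range m ×ˢ S).image fun p => 2 ^ p.1 + p.2 / 2 ^ (m - p.1)) := by
        refine card_le_card fun ν hν => ?_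
        obtain ⟨hνm, hν₀, hne⟩ := by simpa only [mem_filter, mem_range] using hν
        obtain ⟨i, j, hj, rfl⟩ := exists_eq_two_pow_add hν₀
        have hi : i < m := (Nat.pow_lt_pow_iff_right one_lt_two).1 (by omega)
        obtain ⟨b, hb, hchange, hbj⟩ := exists_sign_change_of_sum_haarEntry_ne_zero hi hj hne
        exact mem_image.2 ⟨(i, b), by simp [S, hi, hb, hchange], by simp [hbj]⟩
    _ ≤ #(range m ×ˢ S) := card_image_le
    _ = m * #S := by rw [card_product, card_range]

lemma Finset.sum_le_card_filter_ne_zero {ι : Type*} {s : Finset ι} {f : ι → ℝ}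
    (hf : ∀ i ∈ s, f i ≤ 1) : ∑ i ∈ s, f i ≤ #{i ∈ s | f i ≠ 0} := by
  rw [← sum_filter_ne_zero]
  simpa using sum_le_card_nsmul _ f 1 fun i hi => hf i (mem_filter.1 hi).1

theorem stmt_5 (m ℓ : ℕ) (v : ℕ → ℝ)
    (hv : ∀ a < 2 ^ m, v a = 1 ∨ v a = -1)
    (hsign : ((Finset.range (2 ^ m - 1)).filter (fun i => v (i + 1) ≠ v i)).card ≤ ℓ)
    (Hv : ℕ → ℝ) (hHv : ∀ ν, Hv ν = ∑ a ∈ Finset.range (2 ^ m), haarEntry m ν a * v a) :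
    (∀ ν < 2 ^ m, haarWeight m ν * |Hv ν| ≤ 1) ∧
    (∑ ν ∈ Finset.range (2 ^ m), haarWeight m ν * |Hv ν| ≤ ℓ * m + 1) ∧
    (∑ ν ∈ Finset.range (2 ^ m), (haarWeight m ν * Hv ν) ^ 2 ≤ ℓ * m + 1) := by
  have hv₁ : ∀ a < 2 ^ m, |v a| ≤ 1 := fun a ha => by rcases hv a ha with h | h <;> simp [h]
  have hLinf : ∀ ν < 2 ^ m, haarWeight m ν * |Hv ν| ≤ 1 := fun ν hν => by
    rw [hHv]; exact haarWeight_mul_abs_sum_le_one hν hv₁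
  have hsupport : #{ν ∈ range (2 ^ m) | haarWeight m ν * |Hv ν| ≠ 0} ≤ ℓ * m + 1 :=
    calc _ ≤ #(insert 0 {ν ∈ range (2 ^ m) | ν ≠ 0 ∧ Hv ν ≠ 0}) :=
          card_le_card fun ν hν => by
            by_cases hν₀ : ν = 0
            · simp [hν₀]
            · simp only [mem_filter, mem_insert] at hν ⊢
              exact Or.inr ⟨hν.1, hν₀, fun h => hν.2 (by simp [h])⟩
      _ ≤ m * ℓ + 1 := by
          refine (card_insert_le _ _).trans (Nat.add_le_add_right ?_ 1)
          simp_rw [hHv]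
          exact (card_filter_sum_haarEntry_ne_zero_le m v).trans (Nat.mul_le_mul_left m hsign)
      _ = ℓ * m + 1 := by ring
  have hL1 : ∑ ν ∈ range (2 ^ m), haarWeight m ν * |Hv ν| ≤ ℓ * m + 1 :=
    (sum_le_card_filter_ne_zero fun ν hν => hLinf ν (mem_range.1 hν)).trans
      (by exact_mod_cast hsupport)
  refine ⟨hLinf, hL1, (sum_le_sum fun ν hν => ?_).trans hL1⟩
  rw [← sq_abs, abs_mul, abs_of_nonneg (haarWeight_nonneg m ν)]
  exact sq_le (mul_nonneg (haarWeight_nonneg m ν) (abs_nonneg _)) (hLinf ν (mem_range.1 hν))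
end

section
/- Let $\tau : [N] \to \mathbb{R}_{\geq 0}$ be scores and $w : [N] \to \mathbb{R}_{\geq 0}$ weights, not all zero on indices with positive weight. Let $\tau_{\max} = \max_{i : w_i > 0} \tau_i > 0$ and define $w'_i = (1 - \tau_i/\tau_{\max}) w_i$. Given a partition $[N] = S_G \sqcup S_B$ with $\sum_{i\in S_G} w_i \tau_i < \sum_{i \in S_B} w_i \tau_i$, then: (a) $w'_i \leq w_i$ for all $i$; (b) the support of $w'$ is a strict subset of the support of $w$; and (c) $\sum_{i\in S_G}(w_i - w'_i) < \sum_{i\in S_B}(w_i - w'_i)$. -/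
/-!
Since `wᵢ - w'ᵢ = wᵢ τᵢ / τmax`, the weight removed from any set `S` is `(∑_{i ∈ S} wᵢ τᵢ) / τmax`,
so comparing removed weights is the same as comparing weighted scores. The index attaining `τmax`
with positive weight is sent to weight zero, which makes the support shrink strictly.
-/

open Finset

variable {ι : Type*}

noncomputable def downweight (τ w : ι → ℝ) (t : ℝ) (i : ι) : ℝ := (1 - τ i / t) * w i

lemma sub_downweight (τ w : ι → ℝ) (t : ℝ) (i : ι) :
    w i - downweight τ w t i = w i * τ i / t := by
  unfold downweight; ring

lemma sum_sub_downweight (τ w : ι → ℝ) (t : ℝ) (S : Finset ι) :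
    ∑ i ∈ S, (w i - downweight τ w t i) = (∑ i ∈ S, w i * τ i) / t := by
  simp only [sub_downweight, sum_div]

lemma downweight_le {τ w : ι → ℝ} {t : ℝ} {i : ι} (hτ : 0 ≤ τ i) (hw : 0 ≤ w i) (ht : 0 ≤ t) :
    downweight τ w t i ≤ w i := by
  have := sub_downweight τ w t i
  have : 0 ≤ w i * τ i / t := by positivity
  linarith

lemma downweight_eq_zero_of_eq {τ w : ι → ℝ} {t : ℝ} {i : ι} (ht : t ≠ 0) (hi : τ i = t) :
    downweight τ w t i = 0 := by
  simp [downweight, hi, ht]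

lemma support_downweight_ssubset {τ w : ι → ℝ} {t : ℝ} (ht : t ≠ 0)
    (hach : ∃ i, 0 < w i ∧ τ i = t) :
    {i | downweight τ w t i ≠ 0} ⊂ {i | w i ≠ 0} := by
  have hsub : {i | downweight τ w t i ≠ 0} ⊆ {i | w i ≠ 0} := fun i hi hw ↦
    hi (by simp [downweight, hw])
  obtain ⟨j, hj, hjτ⟩ := hach
  exact (Set.ssubset_iff_of_subset hsub).2
    ⟨j, hj.ne', fun h ↦ h (downweight_eq_zero_of_eq ht hjτ)⟩

theorem stmt_8_general (N : ℕ) (τ w : Fin N → ℝ) (hτ : ∀ i, 0 ≤ τ i) (hw : ∀ i, 0 ≤ w i)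
    (τmax : ℝ) (hτmax_pos : 0 < τmax)
    (hach : ∃ i, 0 < w i ∧ τ i = τmax)
    (SG : Finset (Fin N))
    (hlt : ∑ i ∈ SG, w i * τ i < ∑ i ∈ SGᶜ, w i * τ i)
    (w' : Fin N → ℝ) (hw' : ∀ i, w' i = (1 - τ i / τmax) * w i) :
    (∀ i, w' i ≤ w i) ∧
    {i | w' i ≠ 0} ⊂ {i | w i ≠ 0} ∧
    ∑ i ∈ SG, (w i - w' i) < ∑ i ∈ SGᶜ, (w i - w' i) := by
  obtain rfl : w' = downweight τ w τmax := funext hw'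
  refine ⟨fun i ↦ downweight_le (hτ i) (hw i) hτmax_pos.le,
    support_downweight_ssubset hτmax_pos.ne' hach, ?_⟩
  rw [sum_sub_downweight, sum_sub_downweight]
  exact div_lt_div_of_pos_right hlt hτmax_pos

theorem stmt_8 (N : ℕ) (τ w : Fin N → ℝ) (hτ : ∀ i, 0 ≤ τ i) (hw : ∀ i, 0 ≤ w i)
    (τmax : ℝ) (hτmax_pos : 0 < τmax)
    (hub : ∀ i, 0 < w i → τ i ≤ τmax)
    (hach : ∃ i, 0 < w i ∧ τ i = τmax)
    (SG : Finset (Fin N))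
    (hlt : ∑ i ∈ SG, w i * τ i < ∑ i ∈ SGᶜ, w i * τ i)
    (w' : Fin N → ℝ) (hw' : ∀ i, w' i = (1 - τ i / τmax) * w i) :
    (∀ i, w' i ≤ w i) ∧
    {i | w' i ≠ 0} ⊂ {i | w i ≠ 0} ∧
    ∑ i ∈ SG, (w i - w' i) < ∑ i ∈ SGᶜ, (w i - w' i) :=
  stmt_8_general N τ w hτ hw τmax hτmax_pos hach SG hlt w' hw'
end

section
/- (Shelling lemma) Let $v \in \mathbb{R}^m$ with $\|v\|_2 \leq C$ and $\|v\|_1 = C\sqrt{k}$, where $k$ divides $m$. Then there exist $k$-sparse vectors $v[1], \ldots, v[m/k] \in \mathbb{R}^m$ with pairwise disjoint supports such that: (1) $v = \sum_{i=1}^{m/k} v[i]$; (2) $\sum_{i=1}^{m/k} \|v[i]\|_2 \leq 2C$; and (3) $\sum_{i=1}^{m/k} \|v[i]\|_\infty \leq \frac{1}{k}\|v\|_1 + \|v\|_\infty$. -/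
/-!
Sort the coordinates of `v` by decreasing absolute value and cut the sorted list into consecutive
shells of `k` coordinates. Each coordinate of a shell is dominated by all `k` coordinates of the
previous shell, hence by `Sᵢ / k`, where `Sᵢ` is the `ℓ¹`-norm of the previous shell; since shells
are `k`-sparse, the `ℓ²`-norm of a shell is then at most `Sᵢ / √k`. Summing, every shell but the
first contributes in total at most `‖v‖₁ / √k = C` to the `ℓ²` sum and `‖v‖₁ / k` to the `ℓ^∞`
sum, while the first shell is bounded by `v` itself.
-/

/-- The `ℓ^∞` norm of a vector in `ℝ^m`. -/
noncomputable def linfty {m : ℕ} (x : Fin m → ℝ) : ℝ := ⨆ a, |x a|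

open Finset

open scoped Classical in
theorem sqrt_sum_sq_le_of_card_support_le {ι : Type*} [Fintype ι] {x : ι → ℝ} {M : ℝ} {k : ℕ}
    (hx : ∀ a, |x a| ≤ M) (hM : 0 ≤ M) (hcard : #{a | x a ≠ 0} ≤ k) : √(∑ a, x a ^ 2) ≤ √k * M := by
  have hsupp : ∑ a, x a ^ 2 = ∑ a with x a ≠ 0, x a ^ 2 :=
    (sum_subset (subset_univ _) fun a _ ha => by simp_all).symm
  have hsq : ∑ a, x a ^ 2 ≤ k * M ^ 2 :=
    calc ∑ a, x a ^ 2 ≤ #{a | x a ≠ 0} • M ^ 2 := by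
          rw [hsupp]
          exact sum_le_card_nsmul _ _ _ fun a _ => sq_le_sq.2 ((hx a).trans (le_abs_self M))
      _ ≤ k * M ^ 2 := by rw [nsmul_eq_mul]; gcongr
  calc √(∑ a, x a ^ 2) ≤ √(k * M ^ 2) := Real.sqrt_le_sqrt hsq
    _ = √k * M := by rw [Real.sqrt_mul (Nat.cast_nonneg k), Real.sqrt_sq hM]

section Linfty

variable {m : ℕ}

theorem linfty_nonneg (x : Fin m → ℝ) : 0 ≤ linfty x :=
  Real.iSup_nonneg fun _ => abs_nonneg _

theorem abs_le_linfty (x : Fin m → ℝ) (a : Fin m) : |x a| ≤ linfty x :=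
  le_ciSup (f := fun a => |x a|) (Set.finite_range _).bddAbove a

theorem linfty_le {x : Fin m → ℝ} {M : ℝ} (hx : ∀ a, |x a| ≤ M) (hM : 0 ≤ M) : linfty x ≤ M :=
  Real.iSup_le hx hM

theorem linfty_mono {x y : Fin m → ℝ} (h : ∀ a, |x a| ≤ |y a|) : linfty x ≤ linfty y :=
  linfty_le (fun a => (h a).trans (abs_le_linfty y a)) (linfty_nonneg y)

end Linfty

theorem sum_range_le_add_sum_range {g S : ℕ → ℝ} (hg : 0 ≤ g 0) (hS : ∀ i, 0 ≤ S i)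
    (h : ∀ i, g (i + 1) ≤ S i) : ∀ q, ∑ i ∈ range q, g i ≤ g 0 + ∑ i ∈ range q, S i
  | 0 => by simpa using hg
  | q + 1 => by
    rw [sum_range_succ', sum_range_succ]
    have := sum_le_sum fun i (_ : i ∈ range q) => h i
    linarith [hS q]

theorem exists_perm_antitone_abs {m : ℕ} (v : Fin m → ℝ) :
    ∃ σ : Equiv.Perm (Fin m), Antitone fun b => |v (σ b)| :=
  ⟨Tuple.sort fun a => -|v a|, fun _ _ hbc => by
    simpa using Tuple.monotone_sort (fun a => -|v a|) hbc⟩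

/-- When `σ` sorts `|v|` decreasingly, `shell v σ k i` is the paper's `v[i+1]`. -/
def shell {m : ℕ} (v : Fin m → ℝ) (σ : Equiv.Perm (Fin m)) (k i : ℕ) (a : Fin m) : ℝ :=
  if (σ.symm a : ℕ) / k = i then v a else 0

namespace shell

variable {m k : ℕ} (v : Fin m → ℝ) (σ : Equiv.Perm (Fin m))

theorem rank_div_eq {i : ℕ} {a : Fin m} (h : shell v σ k i a ≠ 0) : (σ.symm a : ℕ) / k = i := by
  by_contra h'
  exact h (if_neg h')

theorem abs_apply (i : ℕ) (a : Fin m) : |shell v σ k i a| = shell (|v ·|) σ k i a := by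
  unfold shell
  split_ifs <;> simp

theorem abs_apply_le (i : ℕ) (a : Fin m) : |shell v σ k i a| ≤ |v a| := by
  unfold shell
  split_ifs <;> simp

theorem eq_zero_or_eq_zero {i j : ℕ} (hij : i ≠ j) (a : Fin m) :
    shell v σ k i a = 0 ∨ shell v σ k j a = 0 := by
  by_contra! h
  exact hij ((rank_div_eq v σ h.1).symm.trans (rank_div_eq v σ h.2))

open scoped Classical in
theorem card_support_le (hk : 0 < k) (i : ℕ) : #{a | shell v σ k i a ≠ 0} ≤ k := by
  have hinj : Set.InjOn (fun a => (σ.symm a : ℕ) % k) {a | shell v σ k i a ≠ 0} := by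
    intro a ha b hb hmod
    have hrank : (σ.symm a : ℕ) = σ.symm b :=
      calc (σ.symm a : ℕ) = k * ((σ.symm a : ℕ) / k) + (σ.symm a : ℕ) % k :=
            (Nat.div_add_mod _ _).symm
        _ = k * ((σ.symm b : ℕ) / k) + (σ.symm b : ℕ) % k := by
            rw [rank_div_eq v σ ha, rank_div_eq v σ hb]
            exact congrArg _ hmod
        _ = σ.symm b := Nat.div_add_mod _ _
    exact σ.symm.injective (Fin.ext hrank)
  simpa using card_le_card_of_injOn (t := range k) _
    (fun a _ => mem_coe.2 (mem_range.2 (Nat.mod_lt _ hk))) (by simpa using hinj)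

theorem sum_apply (hdvd : k ∣ m) (a : Fin m) : ∑ i : Fin (m / k), shell v σ k i a = v a := by
  let i₀ : Fin (m / k) := ⟨(σ.symm a : ℕ) / k, Nat.div_lt_div_of_lt_of_dvd hdvd (σ.symm a).2⟩
  exact (Fintype.sum_eq_single i₀ fun i hi => if_neg fun h => hi (Fin.ext h.symm)).trans
    (if_pos rfl)

theorem sum_range_sum_abs (hdvd : k ∣ m) :
    ∑ i ∈ range (m / k), ∑ a, |shell v σ k i a| = ∑ a, |v a| := by
  rw [← Fin.sum_univ_eq_sum_range (fun i => ∑ a, |shell v σ k i a|), sum_comm]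
  simp_rw [abs_apply]
  exact sum_congr rfl fun a _ => sum_apply _ σ hdvd a

theorem card_mul_abs_le_sum_abs (hσ : Antitone fun b => |v (σ b)|) {i : ℕ} {b : Fin m}
    (hb : (σ.symm b : ℕ) / k = i + 1) : k * |v b| ≤ ∑ a, |shell v σ k i a| := by
  have hrank : i * k + k ≤ σ.symm b := by
    simpa [hb, add_one_mul] using Nat.div_mul_le_self (σ.symm b : ℕ) k
  have hbm : (σ.symm b : ℕ) < m := (σ.symm b).isLt
  let r : Fin k → Fin m := fun j => ⟨i * k + j, by omega⟩
  have hr : Function.Injective r := fun j j' h => Fin.ext (by simpa [r] using h)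
  have hshell : ∀ j, shell v σ k i (σ (r j)) = v (σ (r j)) := fun j =>
    if_pos (by simpa [r] using Nat.div_eq_of_lt_le (by omega) (by rw [add_one_mul]; omega))
  have hdom : ∀ j, |v b| ≤ |v (σ (r j))| := fun j => by
    have hj : r j ≤ σ.symm b := Fin.le_iff_val_le_val.2 (show i * k + j ≤ (σ.symm b : ℕ) by omega)
    simpa using hσ hj
  calc k * |v b| = ∑ j : Fin k, |v b| := by simp
    _ ≤ ∑ j, |shell v σ k i (σ (r j))| := sum_le_sum fun j _ => by rw [hshell j]; exact hdom j
    _ = ∑ a ∈ univ.image fun j => σ (r j), |shell v σ k i a| :=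
        (sum_image (f := fun a => |shell v σ k i a|) fun _ _ _ _ h => hr (σ.injective h)).symm
    _ ≤ ∑ a, |shell v σ k i a| := sum_le_univ_sum_of_nonneg fun _ => abs_nonneg _

theorem abs_apply_succ_le (hk : 0 < k) (hσ : Antitone fun b => |v (σ b)|) (i : ℕ) (a : Fin m) :
    |shell v σ k (i + 1) a| ≤ (∑ a, |shell v σ k i a|) / k := by
  have hk' : (0 : ℝ) < k := by exact_mod_cast hk
  unfold shell
  split_ifs with ha
  · rw [le_div_iff₀ hk', mul_comm]
    exact card_mul_abs_le_sum_abs v σ hσ ha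
  · simpa using div_nonneg (sum_nonneg fun a _ => abs_nonneg _) hk'.le

theorem linfty_succ_le (hk : 0 < k) (hσ : Antitone fun b => |v (σ b)|) (i : ℕ) :
    linfty (shell v σ k (i + 1)) ≤ (∑ a, |shell v σ k i a|) / k :=
  linfty_le (abs_apply_succ_le v σ hk hσ i) (by positivity)

theorem sqrt_sum_sq_succ_le (hk : 0 < k) (hσ : Antitone fun b => |v (σ b)|) (i : ℕ) :
    √(∑ a, shell v σ k (i + 1) a ^ 2) ≤ (∑ a, |shell v σ k i a|) / √k := by
  have hk' : (0 : ℝ) < √k := Real.sqrt_pos.2 (by exact_mod_cast hk)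
  calc √(∑ a, shell v σ k (i + 1) a ^ 2) ≤ √k * ((∑ a, |shell v σ k i a|) / k) :=
        sqrt_sum_sq_le_of_card_support_le (abs_apply_succ_le v σ hk hσ i) (by positivity)
          (card_support_le v σ hk _)
    _ = (∑ a, |shell v σ k i a|) / √k := by
        rw [mul_div_left_comm, Real.sqrt_div_self', mul_one_div]

theorem sum_sq_le (i : ℕ) : ∑ a, shell v σ k i a ^ 2 ≤ ∑ a, v a ^ 2 :=
  sum_le_sum fun a _ => sq_le_sq.2 (abs_apply_le v σ i a)

end shell

open Finset in
open scoped Classical in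
theorem stmt_9 (m k : ℕ) (hk : 0 < k) (hdvd : k ∣ m) (C : ℝ)
    (v : Fin m → ℝ)
    (h2 : Real.sqrt (∑ a, v a ^ 2) ≤ C)
    (h1 : ∑ a, |v a| = C * Real.sqrt k) :
    ∃ V : Fin (m / k) → Fin m → ℝ,
      (∀ i, (Finset.univ.filter fun a => V i a ≠ 0).card ≤ k) ∧
      (∀ i j, i ≠ j → ∀ a, V i a = 0 ∨ V j a = 0) ∧
      (∀ a, v a = ∑ i, V i a) ∧
      (∑ i, Real.sqrt (∑ a, V i a ^ 2) ≤ 2 * C) ∧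
      (∑ i, linfty (V i) ≤ (1 / k) * (∑ a, |v a|) + linfty v) := by
  obtain ⟨σ, hσ⟩ := exists_perm_antitone_abs v
  have hsqrtk : 0 < √(k : ℝ) := Real.sqrt_pos.2 (by exact_mod_cast hk)
  have hS := shell.sum_range_sum_abs v σ hdvd
  refine ⟨fun i => shell v σ k i, fun i => shell.card_support_le v σ hk i,
    fun i j hij => shell.eq_zero_or_eq_zero v σ (Fin.val_injective.ne hij),
    fun a => (shell.sum_apply v σ hdvd a).symm, ?_, ?_⟩
  · rw [Fin.sum_univ_eq_sum_range (fun i => √(∑ a, shell v σ k i a ^ 2))]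
    calc _ ≤ √(∑ a, shell v σ k 0 a ^ 2) + ∑ i ∈ range (m / k), (∑ a, |shell v σ k i a|) / √k :=
          sum_range_le_add_sum_range (by positivity) (fun _ => by positivity)
            (shell.sqrt_sum_sq_succ_le v σ hk hσ) _
      _ ≤ C + C := by
          rw [← sum_div, hS, h1, mul_div_cancel_right₀ _ hsqrtk.ne']
          gcongr
          exact (Real.sqrt_le_sqrt (shell.sum_sq_le v σ 0)).trans h2
      _ = 2 * C := by ring
  · rw [Fin.sum_univ_eq_sum_range (fun i => linfty (shell v σ k i))]
    calc _ ≤ linfty (shell v σ k 0) + ∑ i ∈ range (m / k), (∑ a, |shell v σ k i a|) / k :=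
          sum_range_le_add_sum_range (linfty_nonneg _) (fun _ => by positivity)
            (shell.linfty_succ_le v σ hk hσ) _
      _ ≤ (1 / k) * (∑ a, |v a|) + linfty v := by
          rw [← sum_div, hS, add_comm, one_div_mul_eq_div]
          gcongr
          exact linfty_mono (shell.abs_apply_le v σ 0)
end

section
/- For any positive integers $m$ and $r$, the number of tuples $(i_1, \ldots, i_{2r}) \in [m]^{2r}$ in which every element of $[m]$ occurs an even (possibly zero) number of times is at most $C^r \cdot m^r \cdot r!$ for some absolute constant $C$. -/
open Finset
open scoped Nat

/-! Deleting the first entry of an even tuple of length `n + 2` together with one later occurrence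
of the same value leaves an even tuple of length `n`, from which the original is recovered by
inserting that value at position `0` and at the recorded position. Hence there are at most
`m (n + 1)` even tuples of length `n + 2` per even tuple of length `n`, and at most
`m ^ r (2r - 1)!! ≤ (2m) ^ r r!` of length `2r`. -/

section EvenTuples

variable {α : Type*} [DecidableEq α]

lemma card_fiber_eq_card_fiber_removeNth {n : ℕ} (f : Fin (n + 1) → α) (p : Fin (n + 1))
    (b : α) :
    #{i | f i = b} = #{i | p.removeNth f i = b} + if f p = b then 1 else 0 := by
  rw [Fin.univ_succAbove n p, filter_cons, apply_ite Finset.card, card_cons, filter_map, card_map]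
  split_ifs <;> rfl

variable [Fintype α]

variable (α) in
def evenTuples (n : ℕ) : Finset (Fin n → α) :=
  {f | ∀ a, Even #{i | f i = a}}

lemma evenTuples_add_two_subset (n : ℕ) :
    evenTuples α (n + 2) ⊆ (univ ×ˢ univ ×ˢ evenTuples α n).image
      fun x : α × Fin (n + 1) × (Fin n → α) =>
        Fin.insertNth 0 x.1 (Fin.insertNth x.2.1 x.1 x.2.2) := by
  intro f hf
  simp only [evenTuples, mem_filter, mem_univ, true_and] at hf
  have hodd : Odd #{i | Fin.removeNth 0 f i = f 0} := by
    have := hf (f 0)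
    rw [card_fiber_eq_card_fiber_removeNth f 0, if_pos rfl, Nat.even_add_one] at this
    exact Nat.not_even_iff_odd.mp this
  obtain ⟨j, hj⟩ : ∃ j, Fin.removeNth 0 f j = f 0 := by
    simpa [Finset.Nonempty] using card_pos.mp hodd.pos
  refine mem_image.mpr ⟨(f 0, j, j.removeNth (Fin.removeNth 0 f)), ?_, ?_⟩
  · simp only [evenTuples, mem_product, mem_univ, mem_filter, true_and]
    intro b
    have := hf b
    rw [card_fiber_eq_card_fiber_removeNth f 0 b, card_fiber_eq_card_fiber_removeNth _ j b, hj,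
      add_assoc, ← two_mul] at this
    exact (Nat.even_add.mp this).mpr (even_two_mul _)
  · have hinsert : Fin.insertNth j (f 0) (j.removeNth (Fin.removeNth 0 f)) = Fin.removeNth 0 f :=
      hj ▸ Fin.insertNth_self_removeNth j _
    simp only [hinsert, Fin.insertNth_self_removeNth]

lemma card_evenTuples_add_two_le (n : ℕ) :
    #(evenTuples α (n + 2)) ≤ Fintype.card α * (n + 1) * #(evenTuples α n) := by
  calc #(evenTuples α (n + 2))
      ≤ #(univ ×ˢ univ ×ˢ evenTuples α n) :=
        (card_le_card (evenTuples_add_two_subset n)).trans card_image_le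
    _ = Fintype.card α * (n + 1) * #(evenTuples α n) := by
      rw [card_product, card_product, card_univ, card_univ, Fintype.card_fin, mul_assoc]

lemma card_evenTuples_two_mul_le (r : ℕ) :
    #(evenTuples α (2 * r)) ≤ (2 * Fintype.card α) ^ r * r ! := by
  induction r with
  | zero => exact (card_le_univ _).trans (by simp)
  | succ r ih =>
    calc #(evenTuples α (2 * r + 2))
        ≤ Fintype.card α * (2 * r + 1) * #(evenTuples α (2 * r)) := card_evenTuples_add_two_le _
      _ ≤ Fintype.card α * (2 * (r + 1)) * ((2 * Fintype.card α) ^ r * r !) := by gcongr; omega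
      _ = (2 * Fintype.card α) ^ (r + 1) * (r + 1)! := by rw [Nat.factorial_succ]; ring

end EvenTuples

theorem stmt_11 : ∃ C : ℝ, 0 < C ∧ ∀ m r : ℕ, 0 < m → 0 < r →
    (Nat.card {f : Fin (2 * r) → Fin m //
        ∀ a : Fin m, Even ((Finset.univ.filter fun j => f j = a).card)} : ℝ)
      ≤ C ^ r * m ^ r * r.factorial := by
  refine ⟨2, two_pos, fun m r _ _ => ?_⟩
  have hcard : Nat.card {f : Fin (2 * r) → Fin m //
      ∀ a : Fin m, Even ((Finset.univ.filter fun j => f j = a).card)}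
        = #(evenTuples (Fin m) (2 * r)) := by
    rw [Nat.card_eq_fintype_card, Fintype.card_subtype, evenTuples]
    congr
  have hbound := card_evenTuples_two_mul_le (α := Fin m) r
  rw [Fintype.card_fin] at hbound
  rw [hcard, ← mul_pow]
  exact_mod_cast hbound
end

section
/- Let $\Sigma \in \mathbb{R}^{n\times n}$ have all entries bounded in absolute value by 1. Let $\mu_1,\ldots,\mu_m \in \Delta^n$, let $\bar\mu = \frac{1}{m}\sum_i \mu_i$, and let $Y_1,\ldots,Y_m$ be independent random standard basis vectors where $Y_i = e_j$ with probability $(\mu_i)_j$. Let $\hat\mu = \frac{1}{m}\sum_i Y_i$. Then for every integer $r \geq 1$, $\mathbb{E}\left[\left((\hat\mu - \bar\mu)^\top \Sigma (\hat\mu - \bar\mu)\right)^r\right] \leq (C/m)^r \cdot r!$ for some absolute constant $C$. -/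
open MeasureTheory ProbabilityTheory Finset

private lemma nat_pow_bound {s m r : ℕ} (h1 : s ≤ m) (h2 : s ≤ r) :
    m ^ s * s ^ (2 * r - s) ≤ m ^ r * r ^ r := by
  have h : 2 * r - s = (r - s) + r := by omega
  rw [h, pow_add]
  calc m ^ s * (s ^ (r - s) * s ^ r)
      ≤ m ^ s * (m ^ (r - s) * r ^ r) :=
        Nat.mul_le_mul_left _ (Nat.mul_le_mul (Nat.pow_le_pow_left h1 _) (Nat.pow_le_pow_left h2 _))
    _ = m ^ r * r ^ r := by
        rw [← mul_assoc, ← pow_add]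
        congr 2
        omega

private lemma rpow_le_exp_factorial (r : ℕ) : (r : ℝ) ^ r ≤ 4 ^ r * r.factorial := by
  have hfac : (0:ℝ) < r.factorial := by
    exact_mod_cast r.factorial_pos
  have hterm : (r:ℝ)^r / r.factorial ≤ ∑ i ∈ Finset.range (r+1), (r:ℝ)^i / i.factorial :=
    Finset.single_le_sum (f := fun i => (r:ℝ)^i / i.factorial)
      (fun i _ => by positivity) (Finset.self_mem_range_succ r)
  have hsum : ∑ i ∈ Finset.range (r+1), (r:ℝ)^i / i.factorial ≤ Real.exp r :=
    Real.sum_le_exp_of_nonneg (Nat.cast_nonneg r) _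
  have hexp : Real.exp r ≤ 4 ^ r := by
    have h1 : Real.exp (r : ℝ) = Real.exp 1 ^ r := by
      rw [← Real.exp_nat_mul]; norm_num
    rw [h1]
    exact pow_le_pow_left₀ (Real.exp_pos 1).le
      (le_of_lt (lt_of_lt_of_le Real.exp_one_lt_d9 (by norm_num))) r
  calc (r:ℝ)^r = ((r:ℝ)^r / r.factorial) * r.factorial := by field_simp
    _ ≤ Real.exp r * r.factorial :=
        mul_le_mul_of_nonneg_right (hterm.trans hsum) hfac.le
    _ ≤ 4^r * r.factorial := mul_le_mul_of_nonneg_right hexp hfac.le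

noncomputable def dd {n m : ℕ} (μ : Fin m → Fin n → ℝ) (i : Fin m) (v a : Fin n) : ℝ :=
  (if v = a then (1:ℝ) else 0) - μ i a

lemma sum_abs_dd_le {n m : ℕ} {μ : Fin m → Fin n → ℝ} {i : Fin m}
    (hnn : ∀ a, 0 ≤ μ i a) (hsum : ∑ a, μ i a = 1) (v : Fin n) :
    ∑ a, |dd μ i v a| ≤ 2 := by
  have h1 : ∑ a, |dd μ i v a| ≤ ∑ a, ((if v = a then (1:ℝ) else 0) + μ i a) := by
    refine Finset.sum_le_sum fun a _ => ?_
    have := abs_sub (if v = a then (1:ℝ) else 0) (μ i a)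
    calc |dd μ i v a| ≤ |if v = a then (1:ℝ) else 0| + |μ i a| := abs_sub _ _
      _ = (if v = a then (1:ℝ) else 0) + μ i a := by
          rw [abs_of_nonneg (by positivity), abs_of_nonneg (hnn a)]
  rw [Finset.sum_add_distrib, hsum] at h1
  have h2 : ∑ a, (if v = a then (1:ℝ) else 0) = 1 := by simp
  linarith

lemma fact_lemma {n m : ℕ} (μ : Fin m → Fin n → ℝ) (h : Fin m → Fin n → ℝ) :
    ∑ y : Fin m → Fin n, (∏ i, μ i (y i)) * ∏ i, h i (y i) = ∏ i, ∑ v, μ i v * h i v := by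
  rw [Fintype.prod_sum (f := fun i v => μ i v * h i v)]
  exact Fintype.sum_congr _ _ fun y => (Finset.prod_mul_distrib).symm

noncomputable def zf {n m : ℕ} (S : Matrix (Fin n) (Fin n) ℝ) (μ : Fin m → Fin n → ℝ)
    (p : Fin m × Fin m) (y : Fin m → Fin n) : ℝ :=
  ∑ a, ∑ b, dd μ p.1 (y p.1) a * S a b * dd μ p.2 (y p.2) b

def idxg {m r : ℕ} (g : Fin r → Fin m × Fin m) (s : Fin r × Bool) : Fin m :=
  if s.2 then (g s.1).2 else (g s.1).1

def lett {n r : ℕ} (A : Fin r → Fin n × Fin n) (s : Fin r × Bool) : Fin n :=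
  if s.2 then (A s.1).2 else (A s.1).1

lemma slotprod {n m r : ℕ} (μ : Fin m → Fin n → ℝ) (g : Fin r → Fin m × Fin m)
    (A : Fin r → Fin n × Fin n) (y : Fin m → Fin n) :
    ∏ s : Fin r × Bool, dd μ (idxg g s) (y (idxg g s)) (lett A s)
      = ∏ j, (dd μ (g j).1 (y (g j).1) (A j).1 * dd μ (g j).2 (y (g j).2) (A j).2) := by
  rw [Fintype.prod_prod_type]
  refine Fintype.prod_congr _ _ fun j => ?_
  rw [Fintype.prod_bool]
  simp only [idxg, lett]
  simp [mul_comm]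

lemma prod_zf_expand {n m r : ℕ} (S : Matrix (Fin n) (Fin n) ℝ) (μ : Fin m → Fin n → ℝ)
    (g : Fin r → Fin m × Fin m) (y : Fin m → Fin n) :
    ∏ j, zf S μ (g j) y
      = ∑ A : Fin r → Fin n × Fin n, (∏ j, S (A j).1 (A j).2) *
          ∏ s : Fin r × Bool, dd μ (idxg g s) (y (idxg g s)) (lett A s) := by
  have hz : ∀ p : Fin m × Fin m, zf S μ p y
      = ∑ q : Fin n × Fin n, dd μ p.1 (y p.1) q.1 * S q.1 q.2 * dd μ p.2 (y p.2) q.2 := by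
    intro p
    rw [zf, Fintype.sum_prod_type]
  calc ∏ j, zf S μ (g j) y
      = ∏ j, ∑ q : Fin n × Fin n,
          dd μ (g j).1 (y (g j).1) q.1 * S q.1 q.2 * dd μ (g j).2 (y (g j).2) q.2 :=
        Fintype.prod_congr _ _ fun j => hz (g j)
    _ = ∑ A : Fin r → Fin n × Fin n, ∏ j,
          (dd μ (g j).1 (y (g j).1) (A j).1 * S (A j).1 (A j).2
            * dd μ (g j).2 (y (g j).2) (A j).2) :=
        Fintype.prod_sum _
    _ = ∑ A : Fin r → Fin n × Fin n, (∏ j, S (A j).1 (A j).2) *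
          ∏ s : Fin r × Bool, dd μ (idxg g s) (y (idxg g s)) (lett A s) := by
        refine Fintype.sum_congr _ _ fun A => ?_
        rw [slotprod, ← Finset.prod_mul_distrib]
        refine Fintype.prod_congr _ _ fun j => ?_
        ring

set_option maxHeartbeats 1000000 in
lemma egz_expand {n m r : ℕ} (S : Matrix (Fin n) (Fin n) ℝ) (μ : Fin m → Fin n → ℝ)
    (g : Fin r → Fin m × Fin m) :
    ∑ y : Fin m → Fin n, (∏ i, μ i (y i)) * ∏ j, zf S μ (g j) y
      = ∑ A : Fin r → Fin n × Fin n, (∏ j, S (A j).1 (A j).2) *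
          ∏ i, ∑ v, μ i v *
            ∏ s ∈ Finset.univ.filter (fun s : Fin r × Bool => idxg g s = i), dd μ i v (lett A s) := by
  calc ∑ y : Fin m → Fin n, (∏ i, μ i (y i)) * ∏ j, zf S μ (g j) y
      = ∑ y : Fin m → Fin n, ∑ A : Fin r → Fin n × Fin n,
          (∏ j, S (A j).1 (A j).2) * ((∏ i, μ i (y i)) *
            ∏ s : Fin r × Bool, dd μ (idxg g s) (y (idxg g s)) (lett A s)) := by
        refine Fintype.sum_congr _ _ fun y => ?_
        rw [prod_zf_expand, Finset.mul_sum]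
        exact Fintype.sum_congr _ _ fun A => by ring
    _ = ∑ A : Fin r → Fin n × Fin n, (∏ j, S (A j).1 (A j).2) *
          ∑ y : Fin m → Fin n, (∏ i, μ i (y i)) *
            ∏ s : Fin r × Bool, dd μ (idxg g s) (y (idxg g s)) (lett A s) := by
        rw [Finset.sum_comm]
        exact Fintype.sum_congr _ _ fun A => (Finset.mul_sum _ _ _).symm
    _ = ∑ A : Fin r → Fin n × Fin n, (∏ j, S (A j).1 (A j).2) *
          ∏ i, ∑ v, μ i v *
            ∏ s ∈ Finset.univ.filter (fun s : Fin r × Bool => idxg g s = i),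
              dd μ i v (lett A s) := by
        refine Fintype.sum_congr _ _ fun A => ?_
        congr 1
        have hfib : ∀ y : Fin m → Fin n,
            ∏ s : Fin r × Bool, dd μ (idxg g s) (y (idxg g s)) (lett A s)
              = ∏ i, ∏ s ∈ Finset.univ.filter (fun s : Fin r × Bool => idxg g s = i),
                  dd μ i (y i) (lett A s) := by
          intro y
          rw [← Finset.prod_fiberwise Finset.univ (idxg g)
            (fun s => dd μ (idxg g s) (y (idxg g s)) (lett A s))]
          refine Fintype.prod_congr _ _ fun i => Finset.prod_congr rfl fun s hs => ?_
          rw [(Finset.mem_filter.1 hs).2]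
        calc ∑ y : Fin m → Fin n, (∏ i, μ i (y i)) *
              ∏ s : Fin r × Bool, dd μ (idxg g s) (y (idxg g s)) (lett A s)
            = ∑ y : Fin m → Fin n, (∏ i, μ i (y i)) *
              ∏ i, ∏ s ∈ Finset.univ.filter (fun s : Fin r × Bool => idxg g s = i),
                  dd μ i (y i) (lett A s) :=
              Fintype.sum_congr _ _ fun y => by rw [hfib]
          _ = _ := fact_lemma μ (fun i v => ∏ s ∈ Finset.univ.filter (fun s : Fin r × Bool => idxg g s = i), dd μ i v (lett A s))
section T3
variable {n m r : ℕ} (S : Matrix (Fin n) (Fin n) ℝ) (μ : Fin m → Fin n → ℝ)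

lemma sum_w_eq_one (hμ : ∀ i, (∀ j, 0 ≤ μ i j) ∧ ∑ j, μ i j = 1) :
    ∑ y : Fin m → Fin n, (∏ i, μ i (y i)) = 1 := by
  have h := fact_lemma μ (fun _ _ => 1)
  simp only [mul_one, Finset.prod_const_one] at h
  rw [h]
  rw [Finset.prod_eq_one fun i _ => (hμ i).2]

lemma abs_zf_le (hS : ∀ a b, |S a b| ≤ 1)
    (hμ : ∀ i, (∀ j, 0 ≤ μ i j) ∧ ∑ j, μ i j = 1) (p : Fin m × Fin m) (y : Fin m → Fin n) :
    |zf S μ p y| ≤ 4 := by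
  have habs : ∀ a b, |dd μ p.1 (y p.1) a * S a b * dd μ p.2 (y p.2) b|
      ≤ |dd μ p.1 (y p.1) a| * |dd μ p.2 (y p.2) b| := by
    intro a b
    rw [abs_mul, abs_mul]
    have h1 := abs_nonneg (dd μ p.1 (y p.1) a)
    have h2 := abs_nonneg (dd μ p.2 (y p.2) b)
    have h3 := hS a b
    have h5 : |dd μ p.1 (y p.1) a| * |S a b| ≤ |dd μ p.1 (y p.1) a| :=
      mul_le_of_le_one_right h1 h3
    exact mul_le_mul_of_nonneg_right h5 h2
  calc |zf S μ p y| ≤ ∑ a, |∑ b, dd μ p.1 (y p.1) a * S a b * dd μ p.2 (y p.2) b| :=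
        Finset.abs_sum_le_sum_abs _ _
    _ ≤ ∑ a, ∑ b, |dd μ p.1 (y p.1) a * S a b * dd μ p.2 (y p.2) b| :=
        Finset.sum_le_sum fun a _ => Finset.abs_sum_le_sum_abs _ _
    _ ≤ ∑ a, ∑ b, |dd μ p.1 (y p.1) a| * |dd μ p.2 (y p.2) b| :=
        Finset.sum_le_sum fun a _ => Finset.sum_le_sum fun b _ => habs a b
    _ = (∑ a, |dd μ p.1 (y p.1) a|) * (∑ b, |dd μ p.2 (y p.2) b|) := by
        rw [Finset.sum_mul_sum]
    _ ≤ 2 * 2 := by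
        have hn1 : (0:ℝ) ≤ ∑ a, |dd μ p.1 (y p.1) a| :=
          Finset.sum_nonneg fun a _ => abs_nonneg _
        have hn2 : (0:ℝ) ≤ ∑ b, |dd μ p.2 (y p.2) b| :=
          Finset.sum_nonneg fun b _ => abs_nonneg _
        have b1 := sum_abs_dd_le (hμ p.1).1 (hμ p.1).2 (y p.1)
        have b2 := sum_abs_dd_le (hμ p.2).1 (hμ p.2).2 (y p.2)
        nlinarith
    _ = 4 := by norm_num

lemma abs_egz_le (hS : ∀ a b, |S a b| ≤ 1)
    (hμ : ∀ i, (∀ j, 0 ≤ μ i j) ∧ ∑ j, μ i j = 1) (g : Fin r → Fin m × Fin m) :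
    |∑ y : Fin m → Fin n, (∏ i, μ i (y i)) * ∏ j, zf S μ (g j) y| ≤ 4 ^ r := by
  have hw : ∀ y : Fin m → Fin n, 0 ≤ ∏ i, μ i (y i) :=
    fun y => Finset.prod_nonneg fun i _ => (hμ i).1 (y i)
  have hprod : ∀ y : Fin m → Fin n, |∏ j, zf S μ (g j) y| ≤ 4 ^ r := by
    intro y
    rw [Finset.abs_prod]
    calc ∏ j, |zf S μ (g j) y| ≤ ∏ _j : Fin r, (4:ℝ) :=
          Finset.prod_le_prod (fun j _ => abs_nonneg _) fun j _ => abs_zf_le S μ hS hμ _ y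
      _ = 4 ^ r := by simp
  calc |∑ y : Fin m → Fin n, (∏ i, μ i (y i)) * ∏ j, zf S μ (g j) y|
      ≤ ∑ y : Fin m → Fin n, |(∏ i, μ i (y i)) * ∏ j, zf S μ (g j) y| :=
        Finset.abs_sum_le_sum_abs _ _
    _ ≤ ∑ y : Fin m → Fin n, (∏ i, μ i (y i)) * 4 ^ r := by
        refine Finset.sum_le_sum fun y _ => ?_
        rw [abs_mul, abs_of_nonneg (hw y)]
        exact mul_le_mul_of_nonneg_left (hprod y) (hw y)
    _ = 1 * 4 ^ r := by rw [← Finset.sum_mul, sum_w_eq_one μ hμ]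
    _ = 4 ^ r := one_mul _

lemma egz_vanish (hμ : ∀ i, (∀ j, 0 ≤ μ i j) ∧ ∑ j, μ i j = 1)
    (g : Fin r → Fin m × Fin m) {k : Fin m}
    (hk : (Finset.univ.filter (fun s : Fin r × Bool => idxg g s = k)).card = 1) :
    ∑ y : Fin m → Fin n, (∏ i, μ i (y i)) * ∏ j, zf S μ (g j) y = 0 := by
  rw [egz_expand]
  refine Finset.sum_eq_zero fun A _ => ?_
  obtain ⟨s₀, hs₀⟩ := Finset.card_eq_one.1 hk
  have hzero : ∑ v, μ k v *
      ∏ s ∈ Finset.univ.filter (fun s : Fin r × Bool => idxg g s = k), dd μ k v (lett A s)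
        = 0 := by
    rw [hs₀]
    simp only [Finset.prod_singleton]
    have hrw : ∀ v, μ k v * dd μ k v (lett A s₀)
        = (if v = lett A s₀ then μ k v else 0) - μ k v * μ k (lett A s₀) := by
      intro v
      rw [dd, mul_sub, mul_ite, mul_one, mul_zero]
    rw [Finset.sum_congr rfl fun v _ => hrw v, Finset.sum_sub_distrib]
    rw [Finset.sum_ite_eq' Finset.univ (lett A s₀) (fun v => μ k v)]
    rw [← Finset.sum_mul, (hμ k).2]
    simp
  exact mul_eq_zero_of_right _ (Finset.prod_eq_zero (Finset.mem_univ k) hzero)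

end T3


section Count

variable {m r : ℕ}

def fibF (F : Fin r × Bool → Fin m) (s : Fin r × Bool) : Finset (Fin r × Bool) :=
  Finset.univ.filter fun s' => F s' = F s

lemma mem_fibF_self (F : Fin r × Bool → Fin m) (s : Fin r × Bool) : s ∈ fibF F s := by
  simp [fibF]

private lemma choose_congr {α : Type*} {A B : Finset α} (h : A = B)
    (hA : A.Nonempty) (hB : B.Nonempty) : hA.choose = hB.choose := by
  subst h
  rfl

noncomputable def leadF (F : Fin r × Bool → Fin m) (s : Fin r × Bool) : Fin r × Bool :=
  (⟨s, mem_fibF_self F s⟩ : (fibF F s).Nonempty).choose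

lemma leadF_mem (F : Fin r × Bool → Fin m) (s : Fin r × Bool) : leadF F s ∈ fibF F s :=
  Exists.choose_spec _

lemma leadF_val (F : Fin r × Bool → Fin m) (s : Fin r × Bool) : F (leadF F s) = F s :=
  (Finset.mem_filter.1 (leadF_mem F s)).2

lemma leadF_congr (F : Fin r × Bool → Fin m) {s s' : Fin r × Bool} (h : F s = F s') :
    leadF F s = leadF F s' := by
  have h2 : fibF F s = fibF F s' := by
    ext t
    simp [fibF, h]
  exact choose_congr h2 _ _

noncomputable def LDF (F : Fin r × Bool → Fin m) : Finset (Fin r × Bool) :=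
  Finset.univ.image (leadF F)

lemma leadF_mem_LDF (F : Fin r × Bool → Fin m) (s : Fin r × Bool) : leadF F s ∈ LDF F :=
  Finset.mem_image_of_mem _ (Finset.mem_univ s)

lemma leadF_self (F : Fin r × Bool → Fin m) {s : Fin r × Bool} (hs : s ∈ LDF F) :
    leadF F s = s := by
  obtain ⟨t, _, ht⟩ := Finset.mem_image.1 hs
  have h3 : leadF F (leadF F t) = leadF F t := leadF_congr F (leadF_val F t)
  rw [← ht, h3]

lemma LDF_inj (F : Fin r × Bool → Fin m) {s s' : Fin r × Bool}
    (hs : s ∈ LDF F) (hs' : s' ∈ LDF F) (h : F s = F s') : s = s' := by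
  rw [← leadF_self F hs, ← leadF_self F hs', leadF_congr F h]

lemma LDF_card_le_m (hm : 0 < m) (F : Fin r × Bool → Fin m) : (LDF F).card ≤ m := by
  have h := Finset.card_le_card_of_injOn F (fun s _ => Finset.mem_univ (F s))
    (fun s hs s' hs' h => LDF_inj F (Finset.mem_coe.1 hs) (Finset.mem_coe.1 hs') h)
  simpa using h

lemma LDF_card_le_r (F : Fin r × Bool → Fin m)
    (hval : ∀ k, (Finset.univ.filter fun s : Fin r × Bool => F s = k).card ≠ 1) :
    (LDF F).card ≤ r := by
  have hdisj : ∀ l ∈ LDF F, ∀ l' ∈ LDF F, l ≠ l' → Disjoint (fibF F l) (fibF F l') := by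
    intro l hl l' hl' hne
    rw [Finset.disjoint_left]
    intro t htl htl'
    exact hne (LDF_inj F hl hl'
      ((Finset.mem_filter.1 htl).2.symm.trans (Finset.mem_filter.1 htl').2))
  have hsum : ∑ l ∈ LDF F, (fibF F l).card ≤ (Finset.univ : Finset (Fin r × Bool)).card := by
    rw [← Finset.card_biUnion hdisj]
    exact Finset.card_le_card (Finset.subset_univ _)
  have h2 : ∀ l ∈ LDF F, 2 ≤ (fibF F l).card := by
    intro l hl
    have hpos : 0 < (fibF F l).card := Finset.card_pos.2 ⟨l, mem_fibF_self F l⟩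
    have hne : (fibF F l).card ≠ 1 := hval (F l)
    omega
  have h3 : 2 * (LDF F).card ≤ ∑ l ∈ LDF F, (fibF F l).card := by
    rw [two_mul]
    calc (LDF F).card + (LDF F).card = ∑ _l ∈ LDF F, 2 := by
          rw [Finset.sum_const, smul_eq_mul]; ring
      _ ≤ ∑ l ∈ LDF F, (fibF F l).card := Finset.sum_le_sum h2
  have huniv : (Finset.univ : Finset (Fin r × Bool)).card = 2 * r := by
    simp [Finset.card_univ, Fintype.card_prod]
    ring
  omega

lemma count_lemma (hm : 0 < m) :
    ((Finset.univ.filter fun g : Fin r → Fin m × Fin m =>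
        ∀ k, (Finset.univ.filter fun s : Fin r × Bool => idxg g s = k).card ≠ 1)).card
      ≤ 4 ^ r * (m ^ r * r ^ r) := by
  classical
  set j0 : Fin m := ⟨0, hm⟩ with hj0
  set Codes : Finset (Σ _L : Finset (Fin r × Bool), (Fin r × Bool → Fin r × Bool) × (Fin r × Bool → Fin m)) :=
    (Finset.univ.powerset.filter fun L : Finset (Fin r × Bool) => L.card ≤ m ∧ L.card ≤ r).sigma
      (fun L => (Fintype.piFinset fun s => if s ∈ L then ({s} : Finset (Fin r × Bool)) else L) ×ˢ
               (Fintype.piFinset fun s : Fin r × Bool =>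
                 if s ∈ L then (Finset.univ : Finset (Fin m)) else {j0})) with hCodes
  have hmaps : ∀ g ∈ (Finset.univ.filter fun g : Fin r → Fin m × Fin m =>
        ∀ k, (Finset.univ.filter fun s : Fin r × Bool => idxg g s = k).card ≠ 1),
      (⟨LDF (idxg g), (leadF (idxg g), fun s => if s ∈ LDF (idxg g) then idxg g s else j0)⟩ :
        Σ _L : Finset (Fin r × Bool), (Fin r × Bool → Fin r × Bool) × (Fin r × Bool → Fin m)) ∈ Codes := by
    intro g hg
    rw [Finset.mem_filter] at hg
    rw [hCodes, Finset.mem_sigma]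
    constructor
    · rw [Finset.mem_filter]
      exact ⟨Finset.mem_powerset.2 (Finset.subset_univ _),
        LDF_card_le_m hm (idxg g), LDF_card_le_r (idxg g) hg.2⟩
    · rw [Finset.mem_product]
      constructor
      · rw [Fintype.mem_piFinset]
        intro s
        by_cases hs : s ∈ LDF (idxg g)
        · rw [if_pos hs, Finset.mem_singleton]
          exact leadF_self (idxg g) hs
        · rw [if_neg hs]
          exact leadF_mem_LDF (idxg g) s
      · rw [Fintype.mem_piFinset]
        intro s
        by_cases hs : s ∈ LDF (idxg g)
        · simp [hs]
        · simp [hs]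
  have hdecode : ∀ g : Fin r → Fin m × Fin m, ∀ s,
      (if leadF (idxg g) s ∈ LDF (idxg g) then idxg g (leadF (idxg g) s) else j0)
        = idxg g s := by
    intro g s
    rw [if_pos (leadF_mem_LDF (idxg g) s)]
    exact leadF_val (idxg g) s
  have hinj : Set.InjOn (fun g : Fin r → Fin m × Fin m =>
      (⟨LDF (idxg g), (leadF (idxg g), fun s => if s ∈ LDF (idxg g) then idxg g s else j0)⟩ :
        Σ _L : Finset (Fin r × Bool), (Fin r × Bool → Fin r × Bool) × (Fin r × Bool → Fin m)))
      ((Finset.univ.filter fun g : Fin r → Fin m × Fin m =>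
        ∀ k, (Finset.univ.filter fun s : Fin r × Bool => idxg g s = k).card ≠ 1) : Finset _) := by
    intro g1 _h1 g2 _h2 heq
    simp only [Sigma.mk.inj_iff] at heq
    obtain ⟨hA, hBC⟩ := heq
    have hBC' := eq_of_heq hBC
    have hB : leadF (idxg g1) = leadF (idxg g2) := congrArg Prod.fst hBC'
    have hC : (fun s => if s ∈ LDF (idxg g1) then idxg g1 s else j0)
        = (fun s => if s ∈ LDF (idxg g2) then idxg g2 s else j0) := congrArg Prod.snd hBC'
    have key : ∀ s, idxg g1 s = idxg g2 s := by
      intro s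
      calc idxg g1 s
          = (fun s => if s ∈ LDF (idxg g1) then idxg g1 s else j0) (leadF (idxg g1) s) :=
            (hdecode g1 s).symm
        _ = (fun s => if s ∈ LDF (idxg g2) then idxg g2 s else j0) (leadF (idxg g2) s) := by
            rw [hB, hC]
        _ = idxg g2 s := hdecode g2 s
    funext j
    have k1 := key (j, false)
    have k2 := key (j, true)
    simp only [idxg] at k1 k2
    simp at k1 k2
    exact Prod.ext k1 k2
  have hcards : Codes.card ≤ 4 ^ r * (m ^ r * r ^ r) := by
    rw [hCodes, Finset.card_sigma]
    have hterm : ∀ L ∈ (Finset.univ.powerset.filter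
        fun L : Finset (Fin r × Bool) => L.card ≤ m ∧ L.card ≤ r),
        (((Fintype.piFinset fun s => if s ∈ L then ({s} : Finset (Fin r × Bool)) else L) ×ˢ
          (Fintype.piFinset fun s : Fin r × Bool =>
            if s ∈ L then (Finset.univ : Finset (Fin m)) else {j0}))).card
          ≤ m ^ r * r ^ r := by
      intro L hL
      rw [Finset.mem_filter] at hL
      obtain ⟨-, hLm, hLr⟩ := hL
      rw [Finset.card_product, Fintype.card_piFinset, Fintype.card_piFinset]
      have e1 : ∏ s : Fin r × Bool, ((if s ∈ L then ({s} : Finset (Fin r × Bool)) else L)).card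
          = L.card ^ (2 * r - L.card) := by
        calc ∏ s : Fin r × Bool, ((if s ∈ L then ({s} : Finset (Fin r × Bool)) else L)).card
            = ∏ s : Fin r × Bool, (if s ∈ L then 1 else L.card) := by
              refine Finset.prod_congr rfl fun s _ => ?_
              by_cases hs : s ∈ L <;> simp [hs]
          _ = L.card ^ (2*r - L.card) := by
              rw [Finset.prod_ite]
              rw [Finset.prod_const_one, Finset.prod_const, one_mul]
              congr 1
              have hcompl : Finset.univ.filter (fun s : Fin r × Bool => ¬ s ∈ L) = Lᶜ := by
                ext t
                simp
              rw [hcompl, Finset.card_compl]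
              congr 1
              simp [Fintype.card_prod]
              ring
      have e2 : ∏ s : Fin r × Bool, ((if s ∈ L then (Finset.univ : Finset (Fin m)) else {j0})).card
          = m ^ L.card := by
        calc ∏ s : Fin r × Bool, ((if s ∈ L then (Finset.univ : Finset (Fin m)) else {j0})).card
            = ∏ s : Fin r × Bool, (if s ∈ L then m else 1) := by
              refine Finset.prod_congr rfl fun s _ => ?_
              by_cases hs : s ∈ L <;> simp [hs]
          _ = m ^ L.card := by
              rw [Finset.prod_ite]
              rw [Finset.prod_const_one, Finset.prod_const, mul_one]
              congr 1
              exact congrArg Finset.card (Finset.filter_univ_mem L)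
      rw [e1, e2, mul_comm]
      exact nat_pow_bound hLm hLr
    calc ∑ L ∈ (Finset.univ.powerset.filter
          fun L : Finset (Fin r × Bool) => L.card ≤ m ∧ L.card ≤ r),
          (((Fintype.piFinset fun s => if s ∈ L then ({s} : Finset (Fin r × Bool)) else L) ×ˢ
            (Fintype.piFinset fun s : Fin r × Bool =>
              if s ∈ L then (Finset.univ : Finset (Fin m)) else {j0}))).card
        ≤ (Finset.univ.powerset.filter
            fun L : Finset (Fin r × Bool) => L.card ≤ m ∧ L.card ≤ r).card * (m ^ r * r ^ r) := by
          have := Finset.sum_le_card_nsmul _ _ _ hterm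
          simpa [smul_eq_mul] using this
      _ ≤ 4 ^ r * (m ^ r * r ^ r) := by
          refine Nat.mul_le_mul_right _ ?_
          calc (Finset.univ.powerset.filter
              fun L : Finset (Fin r × Bool) => L.card ≤ m ∧ L.card ≤ r).card
              ≤ (Finset.univ : Finset (Fin r × Bool)).powerset.card := Finset.card_filter_le _ _
            _ = 2 ^ (2 * r) := by
                rw [Finset.card_powerset]
                congr 1
                simp [Fintype.card_prod]
                ring
            _ = 4 ^ r := by
                rw [pow_mul]
                norm_num
      
  calc ((Finset.univ.filter fun g : Fin r → Fin m × Fin m =>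
        ∀ k, (Finset.univ.filter fun s : Fin r × Bool => idxg g s = k).card ≠ 1)).card
      ≤ Codes.card := Finset.card_le_card_of_injOn _ hmaps hinj
    _ ≤ 4 ^ r * (m ^ r * r ^ r) := hcards

end Count

lemma reduce {n m : ℕ} (μ : Fin m → Fin n → ℝ) (hμ : ∀ i, (∀ j, 0 ≤ μ i j) ∧ ∑ j, μ i j = 1)
    (Ω : Type) (mΩ : MeasurableSpace Ω) (P : Measure Ω) [IsProbabilityMeasure P]
    (Y : Fin m → Ω → Fin n) (hY : ∀ i, Measurable (Y i))
    (hind : iIndepFun Y P)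
    (hmarg : ∀ i j, P {ω | Y i ω = j} = ENNReal.ofReal (μ i j))
    (F : (Fin m → Fin n) → ℝ) :
    ∫ ω, F (fun i => Y i ω) ∂P = ∑ y : Fin m → Fin n, (∏ i, μ i (y i)) * F y := by
  classical
  have hseteq : ∀ y : Fin m → Fin n, {ω | ∀ i, Y i ω = y i} = ⋂ i, Y i ⁻¹' {y i} := by
    intro y
    ext ω
    simp [Set.mem_iInter]
  have hA : ∀ y : Fin m → Fin n, MeasurableSet {ω | ∀ i, Y i ω = y i} := by
    intro y
    rw [hseteq y]
    exact MeasurableSet.iInter fun i => (hY i) (measurableSet_singleton (y i))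
  have hmeasval : ∀ y : Fin m → Fin n,
      (P {ω | ∀ i, Y i ω = y i}).toReal = ∏ i, μ i (y i) := by
    intro y
    rw [hseteq y]
    have h2 : P (⋂ i, Y i ⁻¹' {y i}) = ∏ i, P (Y i ⁻¹' {y i}) :=
      hind.meas_iInter fun i => ⟨{y i}, measurableSet_singleton _, rfl⟩
    have h3 : ∀ i, P (Y i ⁻¹' {y i}) = ENNReal.ofReal (μ i (y i)) := by
      intro i
      exact hmarg i (y i)
    rw [h2]
    rw [Finset.prod_congr rfl fun i _ => h3 i]
    rw [ENNReal.toReal_prod]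
    exact Finset.prod_congr rfl fun i _ => ENNReal.toReal_ofReal ((hμ i).1 (y i))
  have hrw : (fun ω => F (fun i => Y i ω))
      = fun ω => ∑ y : Fin m → Fin n,
          Set.indicator {ω' | ∀ i, Y i ω' = y i} (fun _ => F y) ω := by
    funext ω
    have hterm : ∀ y : Fin m → Fin n,
        Set.indicator {ω' | ∀ i, Y i ω' = y i} (fun _ => F y) ω
          = if (fun i => Y i ω) = y then F y else 0 := by
      intro y
      rw [Set.indicator_apply]
      by_cases h : (fun i => Y i ω) = y
      · rw [if_pos (show ω ∈ {ω' | ∀ i, Y i ω' = y i} from fun i => congrFun h i), if_pos h]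
      · rw [if_neg (show ¬ ω ∈ {ω' | ∀ i, Y i ω' = y i} from fun hc => h (funext hc)), if_neg h]
    rw [Finset.sum_congr rfl fun y _ => hterm y, Finset.sum_ite_eq]
    simp
  rw [hrw, integral_finset_sum]
  · refine Finset.sum_congr rfl fun y _ => ?_
    rw [integral_indicator_const (F y) (hA y), smul_eq_mul, measureReal_def, hmeasval y]
  · intro y _
    exact (integrable_const (F y)).indicator (hA y)

section Main

set_option maxHeartbeats 1000000 in
lemma main_finite {n m r : ℕ} (hm : 0 < m) (hr : 1 ≤ r)
    (S : Matrix (Fin n) (Fin n) ℝ) (hS : ∀ a b, |S a b| ≤ 1)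
    (μ : Fin m → Fin n → ℝ) (hμ : ∀ i, (∀ j, 0 ≤ μ i j) ∧ ∑ j, μ i j = 1) :
    ∑ y : Fin m → Fin n, (∏ i, μ i (y i)) *
      (∑ a, ∑ b, ((1 / (m:ℝ)) * (∑ i, if y i = a then (1 : ℝ) else 0) - (1 / (m:ℝ)) * ∑ i, μ i a)
        * S a b
        * ((1 / (m:ℝ)) * (∑ i, if y i = b then (1 : ℝ) else 0) - (1 / (m:ℝ)) * ∑ i, μ i b)) ^ r
      ≤ (64 / (m:ℝ)) ^ r * r.factorial := by
  classical
  have hM : (0:ℝ) < m := Nat.cast_pos.mpr hm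
  have hx : ∀ (y : Fin m → Fin n) (a : Fin n),
      (1 / (m:ℝ)) * (∑ i, if y i = a then (1:ℝ) else 0) - (1 / (m:ℝ)) * ∑ i, μ i a
        = (1 / (m:ℝ)) * ∑ i, dd μ i (y i) a := by
    intro y a
    rw [← mul_sub, ← Finset.sum_sub_distrib]
    rfl
  have hQ : ∀ y : Fin m → Fin n,
      (∑ a, ∑ b, ((1 / (m:ℝ)) * (∑ i, if y i = a then (1:ℝ) else 0) - (1 / (m:ℝ)) * ∑ i, μ i a)
        * S a b
        * ((1 / (m:ℝ)) * (∑ i, if y i = b then (1:ℝ) else 0) - (1 / (m:ℝ)) * ∑ i, μ i b))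
      = (1/(m:ℝ))^2 * ∑ p : Fin m × Fin m, zf S μ p y := by
    intro y
    have e1 : ∀ a b : Fin n,
        ((1 / (m:ℝ)) * (∑ i, if y i = a then (1:ℝ) else 0) - (1 / (m:ℝ)) * ∑ i, μ i a)
          * S a b
          * ((1 / (m:ℝ)) * (∑ i, if y i = b then (1:ℝ) else 0) - (1 / (m:ℝ)) * ∑ i, μ i b)
        = (1/(m:ℝ))^2 * ((∑ i, dd μ i (y i) a) * S a b * (∑ i, dd μ i (y i) b)) := by
      intro a b
      rw [hx y a, hx y b]
      ring
    calc (∑ a, ∑ b, ((1 / (m:ℝ)) * (∑ i, if y i = a then (1:ℝ) else 0) - (1 / (m:ℝ)) * ∑ i, μ i a)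
        * S a b
        * ((1 / (m:ℝ)) * (∑ i, if y i = b then (1:ℝ) else 0) - (1 / (m:ℝ)) * ∑ i, μ i b))
        = ∑ a, ∑ b, (1/(m:ℝ))^2 * ((∑ i, dd μ i (y i) a) * S a b * (∑ i, dd μ i (y i) b)) :=
          Finset.sum_congr rfl fun a _ => Finset.sum_congr rfl fun b _ => e1 a b
      _ = (1/(m:ℝ))^2 * ∑ a, ∑ b, (∑ i, dd μ i (y i) a) * S a b * (∑ i, dd μ i (y i) b) := by
          rw [Finset.mul_sum]
          exact Finset.sum_congr rfl fun a _ => (Finset.mul_sum _ _ _).symm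
      _ = (1/(m:ℝ))^2 * ∑ p : Fin m × Fin m, zf S μ p y := by
          congr 1
          calc ∑ a, ∑ b, (∑ i, dd μ i (y i) a) * S a b * (∑ i, dd μ i (y i) b)
              = ∑ a, ∑ b, ∑ i, ∑ i', dd μ i (y i) a * S a b * dd μ i' (y i') b := by
                refine Finset.sum_congr rfl fun a _ => Finset.sum_congr rfl fun b _ => ?_
                rw [Finset.sum_mul, Finset.sum_mul_sum]
            _ = ∑ a, ∑ i, ∑ b, ∑ i', dd μ i (y i) a * S a b * dd μ i' (y i') b :=
                Finset.sum_congr rfl fun a _ => Finset.sum_comm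
            _ = ∑ i, ∑ a, ∑ b, ∑ i', dd μ i (y i) a * S a b * dd μ i' (y i') b :=
                Finset.sum_comm
            _ = ∑ i, ∑ a, ∑ i', ∑ b, dd μ i (y i) a * S a b * dd μ i' (y i') b :=
                Finset.sum_congr rfl fun i _ => Finset.sum_congr rfl fun a _ => Finset.sum_comm
            _ = ∑ i, ∑ i', ∑ a, ∑ b, dd μ i (y i) a * S a b * dd μ i' (y i') b :=
                Finset.sum_congr rfl fun i _ => Finset.sum_comm
            _ = ∑ p : Fin m × Fin m, zf S μ p y := by
                rw [Fintype.sum_prod_type]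
                rfl
  have hpow : ∀ y : Fin m → Fin n,
      ((1/(m:ℝ))^2 * ∑ p : Fin m × Fin m, zf S μ p y) ^ r
        = (1/(m:ℝ))^(2*r) * ∑ g : Fin r → Fin m × Fin m, ∏ j, zf S μ (g j) y := by
    intro y
    rw [mul_pow, ← pow_mul, Fintype.sum_pow]
  have hmain : ∑ y : Fin m → Fin n, (∏ i, μ i (y i)) *
      (∑ a, ∑ b, ((1 / (m:ℝ)) * (∑ i, if y i = a then (1:ℝ) else 0) - (1 / (m:ℝ)) * ∑ i, μ i a)
        * S a b
        * ((1 / (m:ℝ)) * (∑ i, if y i = b then (1:ℝ) else 0) - (1 / (m:ℝ)) * ∑ i, μ i b)) ^ r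
      = (1/(m:ℝ))^(2*r) * ∑ g : Fin r → Fin m × Fin m,
          ∑ y : Fin m → Fin n, (∏ i, μ i (y i)) * ∏ j, zf S μ (g j) y := by
    calc ∑ y : Fin m → Fin n, (∏ i, μ i (y i)) *
        (∑ a, ∑ b, ((1 / (m:ℝ)) * (∑ i, if y i = a then (1:ℝ) else 0) - (1 / (m:ℝ)) * ∑ i, μ i a)
          * S a b
          * ((1 / (m:ℝ)) * (∑ i, if y i = b then (1:ℝ) else 0) - (1 / (m:ℝ)) * ∑ i, μ i b)) ^ r
        = ∑ y : Fin m → Fin n, (1/(m:ℝ))^(2*r) * ∑ g : Fin r → Fin m × Fin m,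
            (∏ i, μ i (y i)) * ∏ j, zf S μ (g j) y := by
          refine Finset.sum_congr rfl fun y _ => ?_
          rw [hQ y, hpow y, mul_left_comm, Finset.mul_sum]
      _ = (1/(m:ℝ))^(2*r) * ∑ g : Fin r → Fin m × Fin m,
            ∑ y : Fin m → Fin n, (∏ i, μ i (y i)) * ∏ j, zf S μ (g j) y := by
          rw [← Finset.mul_sum]
          congr 1
          exact Finset.sum_comm
  rw [hmain]
  set V := Finset.univ.filter (fun g : Fin r → Fin m × Fin m =>
      ∀ k, (Finset.univ.filter fun s : Fin r × Bool => idxg g s = k).card ≠ 1) with hV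
  have hsplit : ∑ g : Fin r → Fin m × Fin m,
        ∑ y : Fin m → Fin n, (∏ i, μ i (y i)) * ∏ j, zf S μ (g j) y
      = ∑ g ∈ V, ∑ y : Fin m → Fin n, (∏ i, μ i (y i)) * ∏ j, zf S μ (g j) y := by
    rw [← Finset.sum_filter_add_sum_filter_not Finset.univ
      (fun g : Fin r → Fin m × Fin m =>
        ∀ k, (Finset.univ.filter fun s : Fin r × Bool => idxg g s = k).card ≠ 1)
      (fun g => ∑ y : Fin m → Fin n, (∏ i, μ i (y i)) * ∏ j, zf S μ (g j) y)]
    have hzero : ∑ g ∈ Finset.univ.filter (fun g : Fin r → Fin m × Fin m =>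
        ¬ (∀ k, (Finset.univ.filter fun s : Fin r × Bool => idxg g s = k).card ≠ 1)),
        ∑ y : Fin m → Fin n, (∏ i, μ i (y i)) * ∏ j, zf S μ (g j) y = 0 := by
      refine Finset.sum_eq_zero fun g hg => ?_
      rw [Finset.mem_filter] at hg
      obtain ⟨k, hk⟩ := not_forall.1 hg.2
      exact egz_vanish S μ hμ g (not_not.1 hk)
    rw [hzero, add_zero]
  rw [hsplit]
  have hbound : ∑ g ∈ V, ∑ y : Fin m → Fin n, (∏ i, μ i (y i)) * ∏ j, zf S μ (g j) y
      ≤ (V.card : ℝ) * 4^r := by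
    calc ∑ g ∈ V, ∑ y : Fin m → Fin n, (∏ i, μ i (y i)) * ∏ j, zf S μ (g j) y
        ≤ ∑ g ∈ V, |∑ y : Fin m → Fin n, (∏ i, μ i (y i)) * ∏ j, zf S μ (g j) y| :=
          Finset.sum_le_sum fun g _ => le_abs_self _
      _ ≤ ∑ _g ∈ V, (4:ℝ)^r := Finset.sum_le_sum fun g _ => abs_egz_le S μ hS hμ g
      _ = (V.card : ℝ) * 4^r := by rw [Finset.sum_const, nsmul_eq_mul]
  have hcount : (V.card : ℝ) ≤ 4^r * ((m:ℝ)^r * (r:ℝ)^r) := by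
    have hc := count_lemma (m := m) (r := r) hm
    calc (V.card : ℝ) ≤ ((4 ^ r * (m ^ r * r ^ r) : ℕ) : ℝ) := Nat.cast_le.2 hc
      _ = 4^r * ((m:ℝ)^r * (r:ℝ)^r) := by push_cast; ring
  have hfin : (1/(m:ℝ))^(2*r) * ((4:ℝ)^r * ((m:ℝ)^r * (r:ℝ)^r) * 4^r)
      ≤ (64 / (m:ℝ)) ^ r * r.factorial := by
    have hnum : (1/(m:ℝ))^(2*r) * ((4:ℝ)^r * ((m:ℝ)^r * (r:ℝ)^r) * 4^r)
        = (16/(m:ℝ))^r * (r:ℝ)^r := by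
      rw [two_mul, pow_add]
      simp only [← mul_pow]
      congr 1
      field_simp
      ring
    rw [hnum]
    have h4 : (16/(m:ℝ))^r * (4:ℝ)^r = (64/(m:ℝ))^r := by
      rw [← mul_pow]
      congr 1
      field_simp
      ring
    calc (16/(m:ℝ))^r * (r:ℝ)^r
        ≤ (16/(m:ℝ))^r * ((4:ℝ)^r * r.factorial) :=
          mul_le_mul_of_nonneg_left (rpow_le_exp_factorial r) (by positivity)
      _ = (64/(m:ℝ))^r * r.factorial := by rw [← mul_assoc, h4]
  calc (1/(m:ℝ))^(2*r) * ∑ g ∈ V, ∑ y : Fin m → Fin n, (∏ i, μ i (y i)) * ∏ j, zf S μ (g j) y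
      ≤ (1/(m:ℝ))^(2*r) * ((V.card : ℝ) * 4^r) :=
        mul_le_mul_of_nonneg_left hbound (by positivity)
    _ ≤ (1/(m:ℝ))^(2*r) * ((4:ℝ)^r * ((m:ℝ)^r * (r:ℝ)^r) * 4^r) := by
        refine mul_le_mul_of_nonneg_left ?_ (by positivity)
        exact mul_le_mul_of_nonneg_right hcount (by positivity)
    _ ≤ (64 / (m:ℝ)) ^ r * r.factorial := hfin

end Main

theorem stmt_12 : ∃ C : ℝ, 0 < C ∧
    ∀ (n m : ℕ), 0 < m →
    ∀ (S : Matrix (Fin n) (Fin n) ℝ), (∀ a b, |S a b| ≤ 1) →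
    ∀ (μ : Fin m → Fin n → ℝ), (∀ i, (∀ j, 0 ≤ μ i j) ∧ ∑ j, μ i j = 1) →
    ∀ (Ω : Type) (mΩ : MeasurableSpace Ω) (P : Measure Ω), IsProbabilityMeasure P →
    ∀ Y : Fin m → Ω → Fin n, (∀ i, Measurable (Y i)) →
      iIndepFun Y P →
      (∀ i j, P {ω | Y i ω = j} = ENNReal.ofReal (μ i j)) →
      ∀ r : ℕ, 1 ≤ r →
        (∫ ω, (∑ a, ∑ b,
            ((1 / m) * (∑ i, if Y i ω = a then (1 : ℝ) else 0) - (1 / m) * ∑ i, μ i a)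
              * S a b
              * ((1 / m) * (∑ i, if Y i ω = b then (1 : ℝ) else 0) - (1 / m) * ∑ i, μ i b))
            ^ r ∂P)
          ≤ (C / m) ^ r * r.factorial := by
  refine ⟨64, by norm_num, ?_⟩
  intro n m hm S hS μ hμ Ω mΩ P hP Y hY hind hmarg r hr
  haveI := hP
  have hred : (∫ ω, (∑ a, ∑ b,
        ((1 / (m:ℝ)) * (∑ i, if Y i ω = a then (1 : ℝ) else 0) - (1 / (m:ℝ)) * ∑ i, μ i a)
          * S a b
          * ((1 / (m:ℝ)) * (∑ i, if Y i ω = b then (1 : ℝ) else 0) - (1 / (m:ℝ)) * ∑ i, μ i b))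
        ^ r ∂P)
      = ∑ y : Fin m → Fin n, (∏ i, μ i (y i)) *
          (∑ a, ∑ b, ((1 / (m:ℝ)) * (∑ i, if y i = a then (1 : ℝ) else 0) - (1 / (m:ℝ)) * ∑ i, μ i a)
            * S a b
            * ((1 / (m:ℝ)) * (∑ i, if y i = b then (1 : ℝ) else 0) - (1 / (m:ℝ)) * ∑ i, μ i b)) ^ r :=
    reduce μ hμ Ω mΩ P Y hY hind hmarg
      (fun y => (∑ a, ∑ b,
        ((1 / (m:ℝ)) * (∑ i, if y i = a then (1 : ℝ) else 0) - (1 / (m:ℝ)) * ∑ i, μ i a)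
          * S a b
          * ((1 / (m:ℝ)) * (∑ i, if y i = b then (1 : ℝ) else 0) - (1 / (m:ℝ)) * ∑ i, μ i b)) ^ r)
  rw [hred]
  exact main_finite hm hr S hS μ hμ
end

section
/- Let $\mu, \bar\mu \in \Delta^n$, $k \ge 1$, and define $B(\nu) = \frac{1}{k}(\mathrm{diag}(\nu) - \nu\nu^\top)$. Let $\mu_1,\ldots,\mu_N \in \Delta^n$ with $\bar\mu = \frac{1}{N}\sum_i \mu_i$ and $\|\mu_i - \bar\mu\|_1 \le \omega$ for all $i$. Then for any symmetric matrix $\Sigma$ with entries bounded by 1 in absolute value, $\left|\left\langle \Sigma,\ \frac{1}{N}\sum_{i=1}^N B(\mu_i) - B(\bar\mu)\right\rangle\right| \le \omega^2/k$. -/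
/-! The diagonal part of `B` is linear in `ν`, so it cancels in `(1/N) ∑ᵢ B(μᵢ) - B(μ̄)`, and the
covariance identity turns what is left into `-(1/(kN)) ∑ᵢ (μᵢ - μ̄)(μᵢ - μ̄)ᵀ`. Pairing a rank-one
matrix `u uᵀ` with an entrywise bounded `S` costs at most `‖u‖₁²`. -/

open Finset

noncomputable def mean {ι : Type*} (s : Finset ι) (x : ι → ℝ) : ℝ := 1 / #s * ∑ i ∈ s, x i

/-- The paper's `B(ν)`: the covariance matrix of the empirical frequencies of `k` independent
draws from the distribution `ν`. -/
noncomputable def multinomialCov {α : Type*} [DecidableEq α] (k : ℝ) (ν : α → ℝ) :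
    Matrix α α ℝ :=
  k⁻¹ • (Matrix.diagonal ν - Matrix.vecMulVec ν ν)

section Mean

variable {ι : Type*} (s : Finset ι)

lemma mean_sub (x y : ι → ℝ) : mean s (fun i => x i - y i) = mean s x - mean s y := by
  simp only [mean, sum_sub_distrib, mul_sub]

lemma mean_const_mul (c : ℝ) (x : ι → ℝ) : mean s (fun i => c * x i) = c * mean s x := by
  simp only [mean, ← mul_sum]; ring

lemma mean_zero : mean s (fun _ => 0) = 0 := by
  simp [mean]

lemma mean_sum {κ : Type*} (t : Finset κ) (f : ι → κ → ℝ) :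
    mean s (fun i => ∑ j ∈ t, f i j) = ∑ j ∈ t, mean s (f · j) := by
  simp only [mean, mul_sum]
  exact sum_comm

lemma mean_mul_sub_mean_mul_mean (x y : ι → ℝ) :
    mean s (fun i => x i * y i) - mean s x * mean s y
      = mean s (fun i => (x i - mean s x) * (y i - mean s y)) := by
  rcases s.eq_empty_or_nonempty with rfl | hs
  · simp [mean]
  have hcard : (#s : ℝ) ≠ 0 := by exact_mod_cast hs.card_pos.ne'
  simp only [mean, sub_mul, mul_sub, sum_sub_distrib, ← sum_mul, ← mul_sum, sum_const,
    nsmul_eq_mul]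
  field_simp
  ring

lemma abs_mean_le {x : ι → ℝ} {c : ℝ} (hc : 0 ≤ c) (hx : ∀ i ∈ s, |x i| ≤ c) :
    |mean s x| ≤ c := by
  rcases s.eq_empty_or_nonempty with rfl | hs
  · simpa [mean] using hc
  have hcard : (0 : ℝ) < #s := by exact_mod_cast hs.card_pos
  calc |mean s x| = 1 / #s * |∑ i ∈ s, x i| := by
        rw [mean, abs_mul, abs_of_pos (by positivity)]
    _ ≤ 1 / #s * (#s * c) := by
        gcongr
        exact (abs_sum_le_sum_abs x s).trans (by simpa using sum_le_card_nsmul s _ c hx)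
    _ = c := by field_simp

end Mean

lemma mean_multinomialCov_sub {ι α : Type*} [DecidableEq α] (s : Finset ι) (k : ℝ)
    (ν : ι → α → ℝ) (a b : α) :
    mean s (fun i => multinomialCov k (ν i) a b) - multinomialCov k (fun c => mean s (ν · c)) a b
      = -k⁻¹ * mean s (fun i => (ν i a - mean s (ν · a)) * (ν i b - mean s (ν · b))) := by
  have hdiag : mean s (fun i => Matrix.diagonal (ν i) a b)
      = Matrix.diagonal (fun c => mean s (ν · c)) a b := by
    simp only [Matrix.diagonal_apply]
    split_ifs
    · rfl
    · exact mean_zero s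
  simp only [multinomialCov, Matrix.smul_apply, Matrix.sub_apply, smul_eq_mul, mean_const_mul,
    mean_sub, hdiag, Matrix.vecMulVec_apply, ← mean_mul_sub_mean_mul_mean]
  ring

lemma abs_sum_sum_mul_mul_le {α : Type*} [Fintype α] {S : Matrix α α ℝ}
    (hS : ∀ a b, |S a b| ≤ 1) (u v : α → ℝ) :
    |∑ a, ∑ b, S a b * (u a * v b)| ≤ (∑ a, |u a|) * ∑ b, |v b| := by
  rw [sum_mul_sum]
  refine (abs_sum_le_sum_abs _ _).trans <| sum_le_sum fun a _ =>
    (abs_sum_le_sum_abs _ _).trans <| sum_le_sum fun b _ => ?_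
  rw [abs_mul, abs_mul]
  exact mul_le_of_le_one_left (by positivity) (hS a b)

theorem stmt_17_general (n N k : ℕ) (ω : ℝ)
    (μs : Fin N → Fin n → ℝ)
    (μbar : Fin n → ℝ) (hbar : ∀ a, μbar a = (1 / N) * ∑ i, μs i a)
    (hclose : ∀ i, ∑ a, |μs i a - μbar a| ≤ ω)
    (S : Matrix (Fin n) (Fin n) ℝ) (hbd : ∀ a b, |S a b| ≤ 1)
    (B : (Fin n → ℝ) → Matrix (Fin n) (Fin n) ℝ)
    (hB : ∀ ν a b, B ν a b = (1 / k) * ((if a = b then ν a else 0) - ν a * ν b)) :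
    |∑ a, ∑ b, S a b * ((1 / N) * (∑ i, B (μs i) a b) - B μbar a b)| ≤ ω ^ 2 / k := by
  obtain rfl : B = multinomialCov (k : ℝ) := by
    ext ν a b
    simp [hB, multinomialCov, Matrix.diagonal_apply, Matrix.vecMulVec_apply]
  have hμbar : μbar = fun a => mean univ (μs · a) := funext fun a => by simp [hbar, mean]
  have hdev (a b : Fin n) :
      1 / N * ∑ i, multinomialCov k (μs i) a b - multinomialCov k μbar a b
        = -(k : ℝ)⁻¹ * mean univ (fun i => (μs i a - μbar a) * (μs i b - μbar b)) := by
    subst hμbar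
    simpa [mean] using mean_multinomialCov_sub univ (k : ℝ) μs a b
  calc _ = |-(k : ℝ)⁻¹ *
        mean univ (fun i => ∑ a, ∑ b, S a b * ((μs i a - μbar a) * (μs i b - μbar b)))| := by
        simp only [hdev, mean_sum, mean_const_mul]
        simp only [mul_sum, mul_left_comm]
    _ ≤ (k : ℝ)⁻¹ * ω ^ 2 := by
        rw [abs_mul, abs_neg, abs_inv, Nat.abs_cast]
        gcongr
        refine abs_mean_le _ (sq_nonneg ω) fun i _ => ?_
        exact (abs_sum_sum_mul_mul_le hbd _ _).trans <| (sq ω).symm ▸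
          mul_self_le_mul_self (sum_nonneg fun _ _ => abs_nonneg _) (hclose i)
    _ = ω ^ 2 / k := inv_mul_eq_div _ _

theorem stmt_17 (n N k : ℕ) (hk : 1 ≤ k) (hN : 0 < N) (ω : ℝ) (hω : 0 ≤ ω)
    (μs : Fin N → Fin n → ℝ) (hμs : ∀ i, (∀ a, 0 ≤ μs i a) ∧ ∑ a, μs i a = 1)
    (μbar : Fin n → ℝ) (hbar : ∀ a, μbar a = (1 / N) * ∑ i, μs i a)
    (hclose : ∀ i, ∑ a, |μs i a - μbar a| ≤ ω)
    (S : Matrix (Fin n) (Fin n) ℝ) (hsym : S.IsSymm) (hbd : ∀ a b, |S a b| ≤ 1)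
    (B : (Fin n → ℝ) → Matrix (Fin n) (Fin n) ℝ)
    (hB : ∀ ν a b, B ν a b = (1 / k) * ((if a = b then ν a else 0) - ν a * ν b)) :
    |∑ a, ∑ b, S a b * ((1 / N) * (∑ i, B (μs i) a b) - B μbar a b)| ≤ ω ^ 2 / k :=
  stmt_17_general n N k ω μs μbar hbar hclose S hbd B hB
end
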